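/- arXiv:1708.08242 — 5 statements merged into one kernel-verified Lean document; each statement's English description precedes it below -/
import Mathlib

section
/- Let G be a graph on 2n vertices with an arbitrary orientation, and let A be the 2n×2n matrix with A[i,j] = x_{ij} if i→j, A[i,j] = -x_{ij} if j→i, and 0 otherwise, where x_{ij} are independent indeterminates. Then G has a perfect matching if and only if Pf(A) is not the zero polynomial. -/
open MvPolynomial

/-- The Pfaffian of a `2n × 2n` matrix. -/
def pfaffian {R : Type*} [CommRing R] {n : ℕ} (A : Matrix (Fin (2 * n)) (Fin (2 * n)) R) : R :=
  ∑ σ ∈ Finset.univ.filter (fun σ : Equiv.Perm (Fin (2 * n)) =>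
      (∀ i : Fin n, σ ⟨2 * i.1, by have := i.isLt; omega⟩ < σ ⟨2 * i.1 + 1, by have := i.isLt; omega⟩) ∧
      (∀ i j : Fin n, i < j →
        σ ⟨2 * i.1, by have := i.isLt; omega⟩ < σ ⟨2 * j.1, by have := j.isLt; omega⟩)),
    (Equiv.Perm.sign σ : ℤ) •
      ∏ i : Fin n, A (σ ⟨2 * i.1, by have := i.isLt; omega⟩) (σ ⟨2 * i.1 + 1, by have := i.isLt; omega⟩)

/-- The Tutte matrix of a graph `G` on `2n` vertices with respect to an orientation `D`:
entry `(i,j)` is the indeterminate `x_{ij}` if `i → j`, `-x_{ij}` if `j → i`, and `0` otherwise. -/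
noncomputable def tutteMatrix {n : ℕ} (D : Fin (2 * n) → Fin (2 * n) → Prop) [DecidableRel D] :
    Matrix (Fin (2 * n)) (Fin (2 * n)) (MvPolynomial (Sym2 (Fin (2 * n))) ℚ) :=
  fun i j =>
    if D i j then X s(i, j) else if D j i then -X s(i, j) else 0

namespace PfAux

variable {n : ℕ}

/-- the even-index vertex -/
def e0 (i : Fin n) : Fin (2 * n) := ⟨2 * i.1, by have := i.isLt; omega⟩
/-- the odd-index vertex -/
def e1 (i : Fin n) : Fin (2 * n) := ⟨2 * i.1 + 1, by have := i.isLt; omega⟩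

def pr (σ : Equiv.Perm (Fin (2 * n))) (i : Fin n) : Sym2 (Fin (2 * n)) :=
  s(σ (e0 i), σ (e1 i))

def cond (σ : Equiv.Perm (Fin (2 * n))) : Prop :=
  (∀ i : Fin n, σ (e0 i) < σ (e1 i)) ∧ (∀ i j : Fin n, i < j → σ (e0 i) < σ (e0 j))

lemma e0_ne_e1 (i j : Fin n) : e0 i ≠ e1 j := by
  simp only [e0, e1, ne_eq, Fin.mk.injEq]; omega

lemma e0_inj : Function.Injective (e0 (n := n)) := by
  intro i j h
  simp only [e0, Fin.mk.injEq] at h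
  exact Fin.ext (by omega)

lemma e1_inj : Function.Injective (e1 (n := n)) := by
  intro i j h
  simp only [e1, Fin.mk.injEq] at h
  exact Fin.ext (by omega)

lemma cover (k : Fin (2 * n)) : (∃ i : Fin n, k = e0 i) ∨ (∃ i : Fin n, k = e1 i) := by
  by_cases h : k.1 % 2 = 0
  · exact Or.inl ⟨⟨k.1 / 2, by have := k.isLt; omega⟩, Fin.ext (by simp [e0]; omega)⟩
  · exact Or.inr ⟨⟨k.1 / 2, by have := k.isLt; omega⟩, Fin.ext (by simp [e1]; omega)⟩

lemma pr_inj (σ : Equiv.Perm (Fin (2 * n))) : Function.Injective (pr σ) := by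
  intro i j h
  rw [pr, pr, Sym2.eq_iff] at h
  rcases h with ⟨h1, _⟩ | ⟨h1, _⟩
  · exact e0_inj (σ.injective h1)
  · exact absurd (σ.injective h1) (e0_ne_e1 i j)

/-- the exponent multiset of a permutation -/
noncomputable def expo (σ : Equiv.Perm (Fin (2 * n))) : Sym2 (Fin (2 * n)) →₀ ℕ :=
  ∑ i : Fin n, Finsupp.single (pr σ i) 1

lemma prod_X_eq {ι τ : Type*} (s : Finset ι) (f : ι → τ) :
    (∏ i ∈ s, (X (f i) : MvPolynomial τ ℚ)) =
      monomial (∑ i ∈ s, Finsupp.single (f i) 1) 1 := by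
  classical
  induction s using Finset.induction with
  | empty => simp [monomial_zero']
  | @insert _ _ h ih =>
      rw [Finset.prod_insert h, Finset.sum_insert h, ih, X, monomial_mul, one_mul]

/-- the sign factor of a single entry -/
noncomputable def eps (D : Fin (2 * n) → Fin (2 * n) → Prop) [DecidableRel D]
    (σ : Equiv.Perm (Fin (2 * n))) (i : Fin n) : ℚ :=
  if D (σ (e0 i)) (σ (e1 i)) then 1 else if D (σ (e1 i)) (σ (e0 i)) then -1 else 0

lemma tutte_entry (D : Fin (2 * n) → Fin (2 * n) → Prop) [DecidableRel D]
    (σ : Equiv.Perm (Fin (2 * n))) (i : Fin n) :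
    tutteMatrix D (σ (e0 i)) (σ (e1 i)) = C (eps D σ i) * X (pr σ i) := by
  rw [tutteMatrix, eps, pr]
  split_ifs with h h' <;> simp

open scoped Classical in
lemma pfaffian_tutte (D : Fin (2 * n) → Fin (2 * n) → Prop) [DecidableRel D] :
    pfaffian (tutteMatrix D) =
      ∑ σ ∈ Finset.univ.filter (fun σ : Equiv.Perm (Fin (2 * n)) => cond σ),
        monomial (expo σ) (((Equiv.Perm.sign σ : ℤ) : ℚ) * ∏ i : Fin n, eps D σ i) := by
  classical
  rw [pfaffian]
  refine Finset.sum_congr ?_ ?_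
  · ext σ
    simp only [Finset.mem_filter, Finset.mem_univ, true_and]
    exact Iff.rfl
  · intro σ _
    show (Equiv.Perm.sign σ : ℤ) • ∏ i : Fin n, tutteMatrix D (σ (e0 i)) (σ (e1 i)) = _
    rw [Finset.prod_congr rfl (fun i _ => tutte_entry D σ i), Finset.prod_mul_distrib,
      ← map_prod C (fun i => eps D σ i) Finset.univ, prod_X_eq, C_mul_monomial, mul_one]
    rw [← Int.cast_smul_eq_zsmul ℚ, smul_monomial, smul_eq_mul]
    rfl

lemma expo_pr_ne (σ : Equiv.Perm (Fin (2 * n))) (i : Fin n) : expo σ (pr σ i) ≠ 0 := by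
  rw [expo, Finsupp.finset_sum_apply]
  intro h
  have := Finset.sum_eq_zero_iff.mp h i (Finset.mem_univ i)
  rw [Finsupp.single_eq_same] at this
  exact one_ne_zero this

lemma mem_expo (σ : Equiv.Perm (Fin (2 * n))) (s : Sym2 (Fin (2 * n)))
    (h : expo σ s ≠ 0) : ∃ i, pr σ i = s := by
  by_contra hc
  push_neg at hc
  apply h
  rw [expo, Finsupp.finset_sum_apply]
  exact Finset.sum_eq_zero (fun i _ => Finsupp.single_eq_of_ne' (hc i))

lemma expo_inj {σ τ : Equiv.Perm (Fin (2 * n))} (hσ : cond σ) (hτ : cond τ)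
    (h : expo σ = expo τ) : σ = τ := by
  have hex : ∀ i : Fin n, ∃ j, pr τ j = pr σ i := by
    intro i
    apply mem_expo
    rw [← h]
    exact expo_pr_ne σ i
  choose g hg using hex
  have hcomp : ∀ i, σ (e0 i) = τ (e0 (g i)) ∧ σ (e1 i) = τ (e1 (g i)) := by
    intro i
    have hgi := hg i
    rw [pr, pr, Sym2.eq_iff] at hgi
    rcases hgi with ⟨h1, h2⟩ | ⟨h1, h2⟩
    · exact ⟨h1.symm, h2.symm⟩
    · exfalso
      have := hτ.1 (g i)
      rw [h1, h2] at this
      exact absurd this (lt_asymm (hσ.1 i))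
  have hgmono : StrictMono g := by
    intro i j hij
    have hlt := hσ.2 i j hij
    rw [(hcomp i).1, (hcomp j).1] at hlt
    by_contra hle
    push_neg at hle
    rcases eq_or_lt_of_le hle with heq | hlt2
    · rw [heq] at hlt; exact lt_irrefl _ hlt
    · exact lt_asymm hlt (hτ.2 _ _ hlt2)
  have hgid : g = id := by
    haveI hwf : WellFoundedLT (Fin n) := inferInstance
    refine (@StrictMono.range_inj (Fin n) (Fin n) _ _ hwf g id hgmono strictMono_id).mp ?_
    rw [Set.range_id, Set.range_eq_univ]
    exact Finite.injective_iff_surjective.mp hgmono.injective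
  apply Equiv.ext
  intro k
  rcases cover k with ⟨i, rfl⟩ | ⟨i, rfl⟩
  · simpa [hgid] using (hcomp i).1
  · simpa [hgid] using (hcomp i).2

open scoped Classical in
lemma pf_iff (D : Fin (2 * n) → Fin (2 * n) → Prop) [DecidableRel D] :
    pfaffian (tutteMatrix D) ≠ 0 ↔
      ∃ σ : Equiv.Perm (Fin (2 * n)), cond σ ∧
        ((Equiv.Perm.sign σ : ℤ) : ℚ) * ∏ i : Fin n, eps D σ i ≠ 0 := by
  classical
  rw [pfaffian_tutte]
  constructor
  · intro hne
    obtain ⟨σ, hmem, hterm⟩ := Finset.exists_ne_zero_of_sum_ne_zero hne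
    rw [Finset.mem_filter] at hmem
    refine ⟨σ, hmem.2, ?_⟩
    intro h0
    rw [h0, monomial_zero] at hterm
    exact hterm rfl
  · rintro ⟨σ, hσ, hc⟩ h0
    have hcoeff : coeff (expo σ)
        (∑ τ ∈ Finset.univ.filter (fun τ : Equiv.Perm (Fin (2 * n)) => cond τ),
          monomial (expo τ) (((Equiv.Perm.sign τ : ℤ) : ℚ) * ∏ i : Fin n, eps D τ i)) =
        ((Equiv.Perm.sign σ : ℤ) : ℚ) * ∏ i : Fin n, eps D σ i := by
      rw [coeff_sum]
      rw [Finset.sum_eq_single_of_mem σ (Finset.mem_filter.mpr ⟨Finset.mem_univ σ, hσ⟩)]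
      · rw [coeff_monomial, if_pos rfl]
      · intro τ hτmem hτne
        rw [coeff_monomial, if_neg]
        intro heq
        exact hτne (expo_inj (Finset.mem_filter.mp hτmem).2 hσ heq)
    rw [h0, coeff_zero] at hcoeff
    exact hc hcoeff.symm

/-- building a permutation from a fixed-point-free involution -/
noncomputable def buildPerm (f : Fin (2 * n) → Fin (2 * n)) (L : Finset (Fin (2 * n)))
    (h : L.card = n) : Fin (2 * n) → Fin (2 * n) := fun k =>
  if k.1 % 2 = 0 then L.orderEmbOfFin h ⟨k.1 / 2, by have := k.isLt; omega⟩
  else f (L.orderEmbOfFin h ⟨k.1 / 2, by have := k.isLt; omega⟩)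

lemma buildPerm_e0 (f : Fin (2 * n) → Fin (2 * n)) (L : Finset (Fin (2 * n)))
    (h : L.card = n) (i : Fin n) : buildPerm f L h (e0 i) = L.orderEmbOfFin h i := by
  rw [buildPerm, e0]
  simp only
  rw [if_pos (by omega)]
  congr 1
  refine Fin.ext ?_
  show 2 * i.1 / 2 = i.1
  omega

lemma buildPerm_e1 (f : Fin (2 * n) → Fin (2 * n)) (L : Finset (Fin (2 * n)))
    (h : L.card = n) (i : Fin n) : buildPerm f L h (e1 i) = f (L.orderEmbOfFin h i) := by
  rw [buildPerm, e1]
  simp only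
  rw [if_neg (by omega)]
  congr 2
  refine Fin.ext ?_
  show (2 * i.1 + 1) / 2 = i.1
  omega

lemma pairing_to_perm (f : Fin (2 * n) → Fin (2 * n))
    (hinv : ∀ v, f (f v) = v) (hne : ∀ v, v ≠ f v) :
    ∃ σ : Equiv.Perm (Fin (2 * n)), cond σ ∧ ∀ i : Fin n, σ (e1 i) = f (σ (e0 i)) := by
  classical
  have hfinj : Function.Injective f := Function.LeftInverse.injective hinv
  set L : Finset (Fin (2 * n)) := Finset.univ.filter (fun v => v < f v) with hLdef
  have hmemL : ∀ v, v ∈ L ↔ v < f v := by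
    intro v; rw [hLdef, Finset.mem_filter]; simp
  have hLcard : L.card = n := by
    have himg : Finset.image f L = Finset.univ.filter (fun v => f v < v) := by
      ext w
      simp only [Finset.mem_image, Finset.mem_filter, Finset.mem_univ, true_and]
      constructor
      · rintro ⟨v, hv, rfl⟩
        rw [hinv]
        exact (hmemL v).mp hv
      · intro hw
        exact ⟨f w, (hmemL (f w)).mpr (by rw [hinv]; exact hw), hinv w⟩
    have hcard2 : (Finset.univ.filter (fun v => f v < v)).card = L.card := by
      rw [← himg, Finset.card_image_of_injective _ hfinj]
    have hdisj : Disjoint L (Finset.univ.filter (fun v => f v < v)) := by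
      rw [Finset.disjoint_left]
      intro v hv hv2
      rw [Finset.mem_filter] at hv2
      exact lt_asymm ((hmemL v).mp hv) hv2.2
    have hunion : L ∪ Finset.univ.filter (fun v => f v < v) = Finset.univ := by
      ext v
      simp only [Finset.mem_union, Finset.mem_filter, Finset.mem_univ, true_and, iff_true]
      rw [hmemL]
      exact lt_or_gt_of_ne (hne v)
    have := Finset.card_union_of_disjoint hdisj
    rw [hunion, hcard2, Finset.card_univ, Fintype.card_fin] at this
    omega
  have hLlt : ∀ i : Fin n, L.orderEmbOfFin hLcard i < f (L.orderEmbOfFin hLcard i) :=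
    fun i => (hmemL _).mp (Finset.orderEmbOfFin_mem L hLcard i)
  have hfnotL : ∀ i : Fin n, f (L.orderEmbOfFin hLcard i) ∉ L := by
    intro i hmem
    have := (hmemL _).mp hmem
    rw [hinv] at this
    exact lt_asymm (hLlt i) this
  have hbinj : Function.Injective (buildPerm f L hLcard) := by
    intro k k' hkk
    simp only [buildPerm] at hkk
    by_cases hk : k.1 % 2 = 0 <;> by_cases hk' : k'.1 % 2 = 0
    · rw [if_pos hk, if_pos hk'] at hkk
      have := (L.orderEmbOfFin hLcard).injective hkk
      rw [Fin.mk.injEq] at this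
      exact Fin.ext (by omega)
    · rw [if_pos hk, if_neg hk'] at hkk
      exact absurd (hkk ▸ Finset.orderEmbOfFin_mem L hLcard _) (hfnotL _)
    · rw [if_neg hk, if_pos hk'] at hkk
      exact absurd (hkk ▸ Finset.orderEmbOfFin_mem L hLcard _) (hfnotL _)
    · rw [if_neg hk, if_neg hk'] at hkk
      have := (L.orderEmbOfFin hLcard).injective (hfinj hkk)
      rw [Fin.mk.injEq] at this
      exact Fin.ext (by omega)
  refine ⟨Equiv.ofBijective _ (Finite.injective_iff_bijective.mp hbinj), ⟨?_, ?_⟩, ?_⟩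
  · intro i
    show buildPerm f L hLcard (e0 i) < buildPerm f L hLcard (e1 i)
    rw [buildPerm_e0, buildPerm_e1]
    exact hLlt i
  · intro i j hij
    show buildPerm f L hLcard (e0 i) < buildPerm f L hLcard (e0 j)
    rw [buildPerm_e0, buildPerm_e0]
    exact (L.orderEmbOfFin hLcard).strictMono hij
  · intro i
    show buildPerm f L hLcard (e1 i) = f (buildPerm f L hLcard (e0 i))
    rw [buildPerm_e0, buildPerm_e1]

lemma matching_iff (G : SimpleGraph (Fin (2 * n))) :
    (∃ M : G.Subgraph, M.IsPerfectMatching) ↔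
      ∃ σ : Equiv.Perm (Fin (2 * n)), cond σ ∧
        ∀ i : Fin n, G.Adj (σ (e0 i)) (σ (e1 i)) := by
  constructor
  · rintro ⟨M, hM⟩
    have hex : ∀ v, ∃! w, M.Adj v w := fun v => hM.1 (hM.2 v)
    set f : Fin (2 * n) → Fin (2 * n) := fun v => (hex v).choose with hfdef
    have hadj : ∀ v, M.Adj v (f v) := fun v => (hex v).choose_spec.1
    have huniq : ∀ v w, M.Adj v w → w = f v := fun v w h => (hex v).choose_spec.2 w h
    have hinv : ∀ v, f (f v) = v := fun v => (huniq (f v) v (hadj v).symm).symm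
    have hne : ∀ v, v ≠ f v := fun v => (M.adj_sub (hadj v)).ne
    obtain ⟨σ, hcond, hσf⟩ := pairing_to_perm f hinv hne
    exact ⟨σ, hcond, fun i => by rw [hσf i]; exact M.adj_sub (hadj _)⟩
  · rintro ⟨σ, hcond, hadj⟩
    refine ⟨⟨Set.univ,
      fun v w => ∃ i, (v = σ (e0 i) ∧ w = σ (e1 i)) ∨ (v = σ (e1 i) ∧ w = σ (e0 i)),
      ?_, fun {v w} _ => Set.mem_univ v, ?_⟩, ?_, fun v => Set.mem_univ v⟩
    · rintro v w ⟨i, ⟨rfl, rfl⟩ | ⟨rfl, rfl⟩⟩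
      · exact hadj i
      · exact (hadj i).symm
    · constructor; rintro v w ⟨i, h | h⟩
      · exact ⟨i, Or.inr ⟨h.2, h.1⟩⟩
      · exact ⟨i, Or.inl ⟨h.2, h.1⟩⟩
    · intro v _
      rcases cover (σ.symm v) with ⟨i, hi⟩ | ⟨i, hi⟩
      · have hv : v = σ (e0 i) := by rw [← hi, Equiv.apply_symm_apply]
        refine ⟨σ (e1 i), ⟨i, Or.inl ⟨hv, rfl⟩⟩, ?_⟩
        rintro w' ⟨i', ⟨hv', rfl⟩ | ⟨hv', rfl⟩⟩
        · rw [e0_inj (σ.injective (hv'.symm.trans hv))]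
        · exact absurd (σ.injective (hv'.symm.trans hv)).symm (e0_ne_e1 i i')
      · have hv : v = σ (e1 i) := by rw [← hi, Equiv.apply_symm_apply]
        refine ⟨σ (e0 i), ⟨i, Or.inr ⟨hv, rfl⟩⟩, ?_⟩
        rintro w' ⟨i', ⟨hv', rfl⟩ | ⟨hv', rfl⟩⟩
        · exact absurd (σ.injective (hv'.symm.trans hv)) (e0_ne_e1 i' i)
        · rw [e1_inj (σ.injective (hv'.symm.trans hv))]

end PfAux

/-- Let `G` be a graph on `2n` vertices with an arbitrary orientation `D` of its edges, and
let `A` be the associated Tutte matrix of independent indeterminates.  Then `G` has a perfect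
matching if and only if `Pf(A)` is not the zero polynomial. -/
theorem perfectMatching_iff_pfaffian_ne_zero {n : ℕ} (G : SimpleGraph (Fin (2 * n)))
    (D : Fin (2 * n) → Fin (2 * n) → Prop) [DecidableRel D]
    (hD₁ : ∀ i j, D i j → G.Adj i j)
    (hD₂ : ∀ i j, G.Adj i j → (D i j ↔ ¬ D j i)) :
    (∃ M : G.Subgraph, M.IsPerfectMatching) ↔ pfaffian (tutteMatrix D) ≠ 0 := by
  rw [PfAux.matching_iff G, PfAux.pf_iff D]
  have heps : ∀ (σ : Equiv.Perm (Fin (2 * n))) (i : Fin n),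
      PfAux.eps D σ i ≠ 0 ↔ G.Adj (σ (PfAux.e0 i)) (σ (PfAux.e1 i)) := by
    intro σ i
    rw [PfAux.eps]
    split_ifs with h h'
    · simp only [ne_eq, one_ne_zero, not_false_iff, true_iff]
      exact hD₁ _ _ h
    · simp only [ne_eq, neg_eq_zero, one_ne_zero, not_false_iff, true_iff]
      exact (hD₁ _ _ h').symm
    · constructor
      · intro h0; exact absurd rfl h0
      · intro hadj
        exact absurd ((hD₂ _ _ hadj).mpr h') h
  apply exists_congr
  intro σ
  apply and_congr_right
  intro _
  constructor
  · intro h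
    rw [mul_ne_zero_iff]
    exact ⟨Int.cast_ne_zero.mpr (Units.ne_zero _),
      Finset.prod_ne_zero_iff.mpr (fun i _ => (heps σ i).mpr (h i))⟩
  · intro hmul i
    rw [mul_ne_zero_iff] at hmul
    exact (heps σ i).mp (Finset.prod_ne_zero_iff.mp hmul.2 i (Finset.mem_univ i))
end

section
/- Let G be a graph on 2n vertices with Tutte matrix A of indeterminates. Then G has a perfect matching if and only if det(A) is not the zero polynomial. -/
open MvPolynomial

set_option linter.unusedSectionVars false

namespace TutteAux

open Equiv Equiv.Perm Finset

variable {V : Type*} [Fintype V] [DecidableEq V] [LinearOrder V]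

/-- the set of "bad" points of a permutation: fixed points or points on odd cycles. -/
def crit (σ : Perm V) : Finset V :=
  Finset.univ.filter (fun i => Odd ((σ.cycleOf i).support.card) ∨ σ i = i)

variable (σ : Perm V) (a : V)


lemma apply_mem_S {x : V} (hx : x ∈ (σ.cycleOf a).support) : σ x ∈ (σ.cycleOf a).support := by
  rw [mem_support_cycleOf_iff] at hx ⊢
  exact ⟨hx.1.trans (sameCycle_apply_right.mpr (SameCycle.refl _ _)), hx.2⟩

lemma inv_apply_mem_S {x : V} (hx : x ∈ (σ.cycleOf a).support) : σ⁻¹ x ∈ (σ.cycleOf a).support := by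
  rw [mem_support_cycleOf_iff] at hx ⊢
  refine ⟨hx.1.trans ?_, hx.2⟩
  exact (sameCycle_symm_apply_right.mpr (SameCycle.refl _ _))

lemma not_mem_S_apply {x : V} (hx : x ∉ (σ.cycleOf a).support) : σ x ∉ (σ.cycleOf a).support := fun h => by
  have := inv_apply_mem_S σ a h
  rw [Equiv.Perm.coe_inv, Equiv.symm_apply_apply] at this
  exact hx this

lemma cycleOf_apply_mem {x : V} (hx : x ∈ (σ.cycleOf a).support) : (σ.cycleOf a) x = σ x := by
  rw [mem_support_cycleOf_iff] at hx
  rw [cycleOf_apply, if_pos hx.1]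

lemma cinv_mem {x : V} (hx : x ∈ (σ.cycleOf a).support) : (σ.cycleOf a)⁻¹ x ∈ (σ.cycleOf a).support := by
  rw [← Equiv.Perm.support_inv] at hx ⊢
  exact (Equiv.Perm.apply_mem_support).mpr hx

lemma tau_apply_mem {x : V} (hx : x ∈ (σ.cycleOf a).support) : (σ * (σ.cycleOf a)⁻¹ * (σ.cycleOf a)⁻¹) x = (σ.cycleOf a)⁻¹ x := by
  have h1 : (σ.cycleOf a)⁻¹ x ∈ (σ.cycleOf a).support := cinv_mem σ a hx
  have h2 : (σ.cycleOf a)⁻¹ ((σ.cycleOf a)⁻¹ x) ∈ (σ.cycleOf a).support := cinv_mem σ a h1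
  show σ ((σ.cycleOf a)⁻¹ ((σ.cycleOf a)⁻¹ x)) = (σ.cycleOf a)⁻¹ x
  rw [← cycleOf_apply_mem σ a h2, Equiv.Perm.coe_inv, Equiv.apply_symm_apply]

lemma tau_apply_not_mem {x : V} (hx : x ∉ (σ.cycleOf a).support) : (σ * (σ.cycleOf a)⁻¹ * (σ.cycleOf a)⁻¹) x = σ x := by
  have h : (σ.cycleOf a)⁻¹ x = x := by
    rw [← Equiv.Perm.notMem_support, Equiv.Perm.support_inv]
    exact hx
  show σ ((σ.cycleOf a)⁻¹ ((σ.cycleOf a)⁻¹ x)) = σ x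
  rw [h, h]

lemma tau_pow_not_mem {x : V} (hx : x ∉ (σ.cycleOf a).support) (k : ℕ) :
    ((σ * (σ.cycleOf a)⁻¹ * (σ.cycleOf a)⁻¹) ^ k) x = (σ ^ k) x ∧ (σ ^ k) x ∉ (σ.cycleOf a).support := by
  induction k with
  | zero => simpa using hx
  | succ k ih =>
    rw [pow_succ', pow_succ']
    constructor
    · show (σ * (σ.cycleOf a)⁻¹ * (σ.cycleOf a)⁻¹)
          (((σ * (σ.cycleOf a)⁻¹ * (σ.cycleOf a)⁻¹) ^ k) x) = σ ((σ ^ k) x)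
      rw [ih.1, tau_apply_not_mem σ a ih.2]
    · exact not_mem_S_apply σ a ih.2

lemma tau_pow_mem {x : V} (hx : x ∈ (σ.cycleOf a).support) (k : ℕ) :
    ((σ * (σ.cycleOf a)⁻¹ * (σ.cycleOf a)⁻¹) ^ k) x = ((σ.cycleOf a)⁻¹ ^ k) x ∧ ((σ.cycleOf a)⁻¹ ^ k) x ∈ (σ.cycleOf a).support := by
  induction k with
  | zero => simpa using hx
  | succ k ih =>
    rw [pow_succ', pow_succ']
    constructor
    · show (σ * (σ.cycleOf a)⁻¹ * (σ.cycleOf a)⁻¹)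
          (((σ * (σ.cycleOf a)⁻¹ * (σ.cycleOf a)⁻¹) ^ k) x) = (σ.cycleOf a)⁻¹ (((σ.cycleOf a)⁻¹ ^ k) x)
      rw [ih.1, tau_apply_mem σ a ih.2]
    · exact cinv_mem σ a ih.2

lemma sameCycle_mem_iff {x y : V} (hx : x ∈ (σ.cycleOf a).support) : σ.SameCycle x y ↔ y ∈ (σ.cycleOf a).support := by
  rw [mem_support_cycleOf_iff] at hx
  rw [mem_support_cycleOf_iff]
  exact ⟨fun h => ⟨hx.1.trans h, hx.2⟩, fun h => hx.1.symm.trans h.1⟩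

lemma sameCycle_tau_iff (x y : V) : (σ * (σ.cycleOf a)⁻¹ * (σ.cycleOf a)⁻¹).SameCycle x y ↔ σ.SameCycle x y := by
  by_cases hx : x ∈ (σ.cycleOf a).support
  · rw [sameCycle_mem_iff σ a hx]
    constructor
    · intro h
      obtain ⟨k, hk0, hk1, hk⟩ := Equiv.Perm.SameCycle.exists_pow_eq _ h
      rw [(tau_pow_mem σ a hx k).1] at hk
      rw [← hk]
      exact (tau_pow_mem σ a hx k).2
    · intro hy
      have hcyc : (σ.cycleOf a).IsCycle := by
        refine isCycle_cycleOf σ ?_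
        rw [← Equiv.Perm.mem_support]
        exact (mem_support_cycleOf_iff.mp hx).2
      have hx' : (σ.cycleOf a)⁻¹ x ≠ x := by
        rw [← Equiv.Perm.mem_support, Equiv.Perm.support_inv]; exact hx
      have hy' : (σ.cycleOf a)⁻¹ y ≠ y := by
        rw [← Equiv.Perm.mem_support, Equiv.Perm.support_inv]; exact hy
      obtain ⟨k, hk0, hk1, hk⟩ := Equiv.Perm.SameCycle.exists_pow_eq _ (hcyc.inv.sameCycle hx' hy')
      exact ⟨(k : ℤ), by rw [zpow_natCast, (tau_pow_mem σ a hx k).1, hk]⟩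
  · constructor
    · intro h
      obtain ⟨k, hk0, hk1, hk⟩ := Equiv.Perm.SameCycle.exists_pow_eq _ h
      rw [(tau_pow_not_mem σ a hx k).1] at hk
      exact ⟨(k : ℤ), by rw [zpow_natCast, hk]⟩
    · intro h
      obtain ⟨k, hk0, hk1, hk⟩ := Equiv.Perm.SameCycle.exists_pow_eq _ h
      exact ⟨(k : ℤ), by rw [zpow_natCast, (tau_pow_not_mem σ a hx k).1, hk]⟩

lemma support_tau : (σ * (σ.cycleOf a)⁻¹ * (σ.cycleOf a)⁻¹).support = σ.support := by
  ext x
  by_cases hx : x ∈ (σ.cycleOf a).support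
  · simp only [Equiv.Perm.mem_support]
    rw [tau_apply_mem σ a hx]
    constructor
    · intro _
      exact Equiv.Perm.mem_support.mp (support_cycleOf_le σ a hx)
    · intro _
      rw [← Equiv.Perm.support_inv] at hx
      exact Equiv.Perm.mem_support.mp hx
  · simp only [Equiv.Perm.mem_support]
    rw [tau_apply_not_mem σ a hx]

lemma support_cycleOf_tau (i : V) : ((σ * (σ.cycleOf a)⁻¹ * (σ.cycleOf a)⁻¹).cycleOf i).support = (σ.cycleOf i).support := by
  ext x
  rw [mem_support_cycleOf_iff, mem_support_cycleOf_iff, sameCycle_tau_iff, support_tau]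

lemma crit_tau : crit (σ * (σ.cycleOf a)⁻¹ * (σ.cycleOf a)⁻¹) = crit σ := by
  unfold crit
  apply Finset.filter_congr
  intro i _
  rw [support_cycleOf_tau]
  constructor
  · rintro (h | h)
    · exact Or.inl h
    · refine Or.inr ?_
      by_contra hne
      have : i ∈ σ.support := Equiv.Perm.mem_support.mpr hne
      rw [← support_tau σ a, Equiv.Perm.mem_support] at this
      exact this h
  · rintro (h | h)
    · exact Or.inl h
    · refine Or.inr ?_
      by_contra hne
      have : i ∈ (σ * (σ.cycleOf a)⁻¹ * (σ.cycleOf a)⁻¹).support := Equiv.Perm.mem_support.mpr hne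
      rw [support_tau σ a, Equiv.Perm.mem_support] at this
      exact this h

lemma tau_cycleOf (ha : a ∈ σ.support) : (σ * (σ.cycleOf a)⁻¹ * (σ.cycleOf a)⁻¹).cycleOf a = (σ.cycleOf a)⁻¹ := by
  have haS : a ∈ (σ.cycleOf a).support := mem_support_cycleOf_iff.mpr ⟨SameCycle.refl _ _, ha⟩
  ext x
  rw [cycleOf_apply]
  by_cases hx : x ∈ (σ.cycleOf a).support
  · rw [if_pos, tau_apply_mem σ a hx]
    rw [sameCycle_tau_iff, sameCycle_mem_iff σ a haS]
    exact hx
  · rw [if_neg, eq_comm, ← Equiv.Perm.notMem_support, Equiv.Perm.support_inv]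
    · exact hx
    · rw [sameCycle_tau_iff, sameCycle_mem_iff σ a haS]
      exact hx

lemma min'_congr' (s t : Finset V) (h : s = t) (hs : s.Nonempty) (ht : t.Nonempty) :
    s.min' hs = t.min' ht := by subst h; rfl

section Cancellation

variable {R : Type*} [CommRing R]

lemma prod_tau_eq_neg (A : Matrix V V R) (hskew : ∀ i j, A j i = -A i j)
    (hodd : Odd (σ.cycleOf a).support.card) :
    ∏ i, A ((σ * (σ.cycleOf a)⁻¹ * (σ.cycleOf a)⁻¹) i) i = - ∏ i, A (σ i) i := by
  rw [← Finset.prod_mul_prod_compl (σ.cycleOf a).support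
    (fun i => A ((σ * (σ.cycleOf a)⁻¹ * (σ.cycleOf a)⁻¹) i) i),
    ← Finset.prod_mul_prod_compl (σ.cycleOf a).support (fun i => A (σ i) i)]
  have h2 : ∏ i ∈ (σ.cycleOf a).supportᶜ, A ((σ * (σ.cycleOf a)⁻¹ * (σ.cycleOf a)⁻¹) i) i
      = ∏ i ∈ (σ.cycleOf a).supportᶜ, A (σ i) i :=
    Finset.prod_congr rfl (fun i hi => by rw [tau_apply_not_mem σ a (Finset.mem_compl.mp hi)])
  have h1 : ∏ i ∈ (σ.cycleOf a).support, A ((σ * (σ.cycleOf a)⁻¹ * (σ.cycleOf a)⁻¹) i) i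
      = - ∏ i ∈ (σ.cycleOf a).support, A (σ i) i := by
    have e1 : ∏ i ∈ (σ.cycleOf a).support, A ((σ * (σ.cycleOf a)⁻¹ * (σ.cycleOf a)⁻¹) i) i
        = ∏ i ∈ (σ.cycleOf a).support, A ((σ.cycleOf a)⁻¹ i) i :=
      Finset.prod_congr rfl fun i hi => by rw [tau_apply_mem σ a hi]
    have e2 : ∏ i ∈ (σ.cycleOf a).support, A ((σ.cycleOf a)⁻¹ i) i
        = ∏ j ∈ (σ.cycleOf a).support, A j ((σ.cycleOf a) j) := by
      refine Finset.prod_bij' (fun i _ => (σ.cycleOf a)⁻¹ i) (fun j _ => (σ.cycleOf a) j)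
        (fun i hi => cinv_mem σ a hi) ?_ (fun i _ => by simp) (fun j _ => by simp)
        (fun i hi => by rw [Equiv.Perm.coe_inv, Equiv.apply_symm_apply])
      intro j hj
      rw [← Equiv.Perm.apply_mem_support] at hj
      exact hj
    have e3 : ∏ j ∈ (σ.cycleOf a).support, A j ((σ.cycleOf a) j)
        = (-1) ^ (σ.cycleOf a).support.card * ∏ j ∈ (σ.cycleOf a).support, A ((σ.cycleOf a) j) j := by
      rw [← Finset.prod_const, ← Finset.prod_mul_distrib]
      exact Finset.prod_congr rfl fun j _ => by rw [hskew, neg_one_mul]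
    have e4 : ∏ j ∈ (σ.cycleOf a).support, A ((σ.cycleOf a) j) j
        = ∏ j ∈ (σ.cycleOf a).support, A (σ j) j :=
      Finset.prod_congr rfl fun j hj => by rw [cycleOf_apply_mem σ a hj]
    rw [e1, e2, e3, e4, hodd.neg_one_pow, neg_one_mul]
  rw [h1, h2, neg_mul]

lemma sum_bad_eq_zero (A : Matrix V V R)
    (hskew : ∀ i j, A j i = -A i j) (hdiag : ∀ i, A i i = 0) :
    ∑ σ ∈ Finset.univ.filter (fun σ : Perm V => (crit σ).Nonempty),
      (Equiv.Perm.sign σ • ∏ i, A (σ i) i) = 0 := by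
  have hcrit : ∀ σ : Perm V, ∀ hσ : σ ∈ Finset.univ.filter
      (fun σ : Perm V => (crit σ).Nonempty), (crit σ).Nonempty :=
    fun σ hσ => (Finset.mem_filter.mp hσ).2
  refine Finset.sum_involution
    (fun σ hσ => σ * (σ.cycleOf ((crit σ).min' (hcrit σ hσ)))⁻¹
      * (σ.cycleOf ((crit σ).min' (hcrit σ hσ)))⁻¹) ?_ ?_ ?_ ?_
  · -- sum of paired terms is zero
    intro σ hσ
    beta_reduce
    set a := (crit σ).min' (hcrit σ hσ) with ha_def
    by_cases ha : a ∈ σ.support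
    · have hacrit : a ∈ crit σ := (crit σ).min'_mem (hcrit σ hσ)
      have hodd : Odd ((σ.cycleOf a).support.card) := by
        rcases Finset.mem_filter.mp hacrit with ⟨-, h | h⟩
        · exact h
        · exact absurd h (Equiv.Perm.mem_support.mp ha)
      have hsign : Equiv.Perm.sign (σ * (σ.cycleOf a)⁻¹ * (σ.cycleOf a)⁻¹)
          = Equiv.Perm.sign σ := by
        rw [map_mul, map_mul, map_inv, Int.units_inv_eq_self, mul_assoc,
          Int.units_mul_self, mul_one]
      rw [hsign, prod_tau_eq_neg σ a A hskew hodd, smul_neg]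
      exact add_neg_cancel _
    · have hfix : σ a = a := Equiv.Perm.notMem_support.mp ha
      have hc1 : σ.cycleOf a = 1 := (cycleOf_eq_one_iff σ).mpr hfix
      have h0 : ∏ i, A (σ i) i = 0 :=
        Finset.prod_eq_zero (Finset.mem_univ a) (by rw [hfix, hdiag])
      rw [hc1, inv_one, mul_one, mul_one, h0, smul_zero, add_zero]
  · -- the involution moves elements with nonzero term
    intro σ hσ hne
    set a := (crit σ).min' (hcrit σ hσ) with ha_def
    intro heq
    beta_reduce at heq
    have ha : a ∈ σ.support := by
      by_contra ha
      have hfix : σ a = a := Equiv.Perm.notMem_support.mp ha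
      have h0 : ∏ i, A (σ i) i = 0 :=
        Finset.prod_eq_zero (Finset.mem_univ a) (by rw [hfix, hdiag])
      rw [h0, smul_zero] at hne
      exact hne rfl
    have hacrit : a ∈ crit σ := (crit σ).min'_mem (hcrit σ hσ)
    have hodd : Odd ((σ.cycleOf a).support.card) := by
      rcases Finset.mem_filter.mp hacrit with ⟨-, h | h⟩
      · exact h
      · exact absurd h (Equiv.Perm.mem_support.mp ha)
    have hcyc : (σ.cycleOf a).IsCycle := isCycle_cycleOf σ (Equiv.Perm.mem_support.mp ha)
    have h2 : (σ.cycleOf a)⁻¹ * (σ.cycleOf a)⁻¹ = 1 := by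
      have := heq
      rw [mul_assoc, mul_eq_left] at this
      exact this
    have h3 : (σ.cycleOf a) ^ 2 = 1 := by
      rw [← mul_inv_rev, inv_eq_one] at h2
      rw [← h2, sq]
    have h4 := orderOf_dvd_of_pow_eq_one h3
    rw [hcyc.orderOf] at h4
    have h5 := Nat.le_of_dvd (by norm_num) h4
    have h6 := hcyc.two_le_card_support
    interval_cases h : (σ.cycleOf a).support.card
    · rw [Nat.odd_iff] at hodd
      omega
  · intro σ hσ
    beta_reduce
    rw [Finset.mem_filter]
    refine ⟨Finset.mem_univ _, ?_⟩
    rw [crit_tau]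
    exact hcrit σ hσ
  · intro σ hσ
    beta_reduce
    set a := (crit σ).min' (hcrit σ hσ) with ha_def
    have hc : crit (σ * (σ.cycleOf a)⁻¹ * (σ.cycleOf a)⁻¹) = crit σ := crit_tau σ a
    by_cases ha : a ∈ σ.support
    · have hne' : (crit (σ * (σ.cycleOf a)⁻¹ * (σ.cycleOf a)⁻¹)).Nonempty := by
        rw [hc]; exact hcrit σ hσ
      have hmin : ((crit (σ * (σ.cycleOf a)⁻¹ * (σ.cycleOf a)⁻¹)).min' hne') = a :=
        min'_congr' _ _ hc hne' (hcrit σ hσ)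
      have key : (σ * (σ.cycleOf a)⁻¹ * (σ.cycleOf a)⁻¹).cycleOf
          ((crit (σ * (σ.cycleOf a)⁻¹ * (σ.cycleOf a)⁻¹)).min' hne') = (σ.cycleOf a)⁻¹ := by
        rw [hmin]
        exact tau_cycleOf σ a ha
      rw [key]
      group
    · have hfix : σ a = a := Equiv.Perm.notMem_support.mp ha
      have hc1 : σ.cycleOf a = 1 := (cycleOf_eq_one_iff σ).mpr hfix
      have h2 : σ * (σ.cycleOf a)⁻¹ * (σ.cycleOf a)⁻¹ = σ := by
        rw [hc1, inv_one, mul_one, mul_one]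
      simp only [h2]
      exact h2

end Cancellation

section Matching

lemma exists_involution (σ : Perm V) (hfix : ∀ i, σ i ≠ i)
    (heven : ∀ i, Even ((σ.cycleOf i).support.card)) :
    ∃ f : V → V, (∀ i, f (f i) = i) ∧ (∀ i, f i ≠ i) ∧ (∀ i, f i = σ i ∨ f i = σ⁻¹ i) := by
  classical
  have hmem : ∀ i : V, i ∈ (σ.cycleOf i).support :=
    fun i => mem_support_cycleOf_iff.mpr ⟨SameCycle.refl _ _, Equiv.Perm.mem_support.mpr (hfix i)⟩
  have hne : ∀ i : V, ((σ.cycleOf i).support).Nonempty := fun i => ⟨i, hmem i⟩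
  set b : V → V := fun i => ((σ.cycleOf i).support).min' (hne i) with hb
  set P : V → Prop := fun i => ∃ k, Even k ∧ (σ ^ k) (b i) = i with hP
  have hbσ : ∀ i, b (σ i) = b i := fun i => by
    simp only [hb]; exact min'_congr' _ _ (by rw [cycleOf_self_apply]) _ _
  have par : ∀ i, P i ↔ ¬ P (σ i) := by
    intro i
    have hcyc : σ.IsCycleOn ((σ.cycleOf i).support : Set V) := σ.isCycleOn_support_cycleOf i
    have hbmem : b i ∈ (σ.cycleOf i).support := Finset.min'_mem _ _
    obtain ⟨m, hmlt, hm⟩ := hcyc.exists_pow_eq hbmem (hmem i)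
    have hcong : ∀ k l : ℕ, (σ ^ k) (b i) = (σ ^ l) (b i) → (Even k ↔ Even l) := by
      intro k l hkl
      have h1 := (hcyc.pow_apply_eq_pow_apply hbmem).mp hkl
      have h2 : (2 : ℕ) ∣ (σ.cycleOf i).support.card := (heven i).two_dvd
      have h3 := Nat.ModEq.of_dvd h2 h1
      unfold Nat.ModEq at h3
      rw [Nat.even_iff, Nat.even_iff]
      omega
    constructor
    · rintro ⟨k, hk, hkb⟩ ⟨k', hk', hk'b⟩
      rw [hbσ] at hk'b
      have h1 : (σ ^ k') (b i) = (σ ^ (m + 1)) (b i) := by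
        rw [hk'b, pow_succ', Equiv.Perm.mul_apply, hm]
      have he1 := hcong _ _ h1
      have h2 : (σ ^ k) (b i) = (σ ^ m) (b i) := by rw [hkb, hm]
      have he2 := hcong _ _ h2
      have hme : Even m := he2.mp hk
      have hme1 : Even (m + 1) := he1.mp hk'
      rw [Nat.even_add_one] at hme1
      exact hme1 hme
    · intro hnP
      by_cases hme : Even m
      · exact ⟨m, hme, hm⟩
      · exfalso
        apply hnP
        refine ⟨m + 1, ?_, ?_⟩
        · rw [Nat.even_add_one]; exact hme
        · rw [hbσ, pow_succ', Equiv.Perm.mul_apply, hm]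
  refine ⟨fun i => if P i then σ i else σ⁻¹ i, ?_, ?_, ?_⟩
  · intro i
    beta_reduce
    by_cases h : P i
    · rw [if_pos h, if_neg ((par i).mp h), Equiv.Perm.coe_inv, Equiv.symm_apply_apply]
    · rw [if_neg h]
      have hp : P (σ⁻¹ i) := by
        have := par (σ⁻¹ i)
        rw [Equiv.Perm.coe_inv, Equiv.apply_symm_apply] at this
        exact this.mpr h
      rw [if_pos hp, Equiv.Perm.coe_inv, Equiv.apply_symm_apply]
  · intro i
    beta_reduce
    by_cases h : P i
    · rw [if_pos h]; exact hfix i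
    · rw [if_neg h]
      intro hh
      have := congrArg σ hh
      rw [Equiv.Perm.coe_inv, Equiv.apply_symm_apply] at this
      exact hfix i this.symm
  · intro i
    beta_reduce
    by_cases h : P i
    · exact Or.inl (if_pos h)
    · exact Or.inr (if_neg h)

end Matching

end TutteAux

/-- Let `G` be a graph on `2n` vertices with an arbitrary orientation `D` of its edges, and
let `A` be the associated Tutte matrix of independent indeterminates.  Then `G` has a perfect
matching if and only if `det(A)` is not the zero polynomial. -/
theorem perfectMatching_iff_det_tutteMatrix_ne_zero {n : ℕ} (G : SimpleGraph (Fin (2 * n)))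
    (D : Fin (2 * n) → Fin (2 * n) → Prop) [DecidableRel D]
    (hD₁ : ∀ i j, D i j → G.Adj i j)
    (hD₂ : ∀ i j, G.Adj i j → (D i j ↔ ¬ D j i)) :
    (∃ M : G.Subgraph, M.IsPerfectMatching) ↔ (tutteMatrix D).det ≠ 0 := by
  classical
  set A := tutteMatrix D with hA
  have hskew : ∀ i j, A j i = - A i j := by
    intro i j
    by_cases hij : G.Adj i j
    · have h1 := hD₂ i j hij
      by_cases hd : D i j
      · have hnd : ¬ D j i := h1.mp hd
        simp only [hA, tutteMatrix, if_pos hd, if_neg hnd, Sym2.eq_swap]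
      · have hd' : D j i := by
          by_contra h
          exact hd (h1.mpr h)
        simp only [hA, tutteMatrix, if_pos hd', if_neg hd, Sym2.eq_swap, neg_neg]
    · have h2 : ¬ D i j := fun h => hij (hD₁ i j h)
      have h3 : ¬ D j i := fun h => hij ((hD₁ j i h).symm)
      simp only [hA, tutteMatrix, if_neg h2, if_neg h3, neg_zero]
  have hdiag : ∀ i, A i i = 0 := by
    intro i
    have h2 : ¬ D i i := fun h => G.irrefl (hD₁ i i h)
    simp only [hA, tutteMatrix, if_neg h2]
  have hadj : ∀ i j, A i j ≠ 0 → G.Adj i j := by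
    intro i j h
    by_contra hn
    have h2 : ¬ D i j := fun hh => hn (hD₁ i j hh)
    have h3 : ¬ D j i := fun hh => hn ((hD₁ j i hh).symm)
    exact h (by simp only [hA, tutteMatrix, if_neg h2, if_neg h3])
  constructor
  · rintro ⟨M, hM⟩
    have hex : ∀ v, ∃! w, M.Adj v w := fun v => hM.1 (hM.2 v)
    set f : Fin (2 * n) → Fin (2 * n) := fun v => (hex v).choose with hf
    have hfadj : ∀ v, M.Adj v (f v) := fun v => (hex v).choose_spec.1
    have hfuniq : ∀ v w, M.Adj v w → w = f v := fun v w h => (hex v).choose_spec.2 w h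
    have hff : ∀ v, f (f v) = v := fun v => (hfuniq (f v) v (hfadj v).symm).symm
    set g : Sym2 (Fin (2 * n)) → ℚ := fun e => if e ∈ M.edgeSet then 1 else 0 with hg
    set φ := (MvPolynomial.eval g : MvPolynomial (Sym2 (Fin (2 * n))) ℚ →+* ℚ) with hφ
    set B := φ.mapMatrix A with hB
    have hBapp : ∀ i j, B i j = φ (A i j) := fun i j => rfl
    have hB0 : ∀ i j, j ≠ f i → B i j = 0 := by
      intro i j hne
      have hd : s(i, j) ∉ M.edgeSet := by
        intro hd
        exact hne (hfuniq i j (SimpleGraph.Subgraph.mem_edgeSet.mp hd))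
      rw [hBapp]
      simp only [hA, tutteMatrix]
      split_ifs <;> simp [hφ, hg, hd]
    have hB1 : ∀ i, B i (f i) * B i (f i) = 1 := by
      intro i
      have hGadj : G.Adj i (f i) := M.adj_sub (hfadj i)
      have hedge : s(i, f i) ∈ M.edgeSet := SimpleGraph.Subgraph.mem_edgeSet.mpr (hfadj i)
      rw [hBapp]
      by_cases hd : D i (f i)
      · simp [hA, tutteMatrix, hd, hφ, hg, hedge]
      · have hd' : D (f i) i := by
          by_contra h
          exact hd ((hD₂ i (f i) hGadj).mpr h)
        simp [hA, tutteMatrix, hd, hd', hφ, hg, hedge]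
    have horth : B * B.transpose = 1 := by
      ext i k
      rw [Matrix.mul_apply]
      simp only [Matrix.transpose_apply]
      rw [Finset.sum_eq_single (f i)]
      · by_cases hik : i = k
        · subst hik
          rw [hB1 i, Matrix.one_apply_eq]
        · have hfik : f i ≠ f k := by
            intro h
            apply hik
            rw [← hff i, h, hff]
          rw [hB0 k (f i) hfik, mul_zero, Matrix.one_apply_ne hik]
      · intro j _ hj
        rw [hB0 i j hj, zero_mul]
      · intro h
        exact absurd (Finset.mem_univ _) h
    have hdetB : B.det ≠ 0 := by
      intro h
      have h1 : B.det * B.transpose.det = 1 := by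
        rw [← Matrix.det_mul, horth, Matrix.det_one]
      rw [Matrix.det_transpose] at h1
      rw [h, mul_zero] at h1
      exact zero_ne_one h1
    intro h
    apply hdetB
    have := RingHom.map_det φ A
    rw [← hB, h, map_zero] at this
    exact this.symm
  · intro hdet
    rw [Matrix.det_apply] at hdet
    rw [← Finset.sum_filter_add_sum_filter_not Finset.univ
      (fun σ => (TutteAux.crit σ).Nonempty)] at hdet
    rw [TutteAux.sum_bad_eq_zero A hskew hdiag, zero_add] at hdet
    obtain ⟨σ, hσmem, hσne⟩ := Finset.exists_ne_zero_of_sum_ne_zero hdet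
    have hσgood := (Finset.mem_filter.mp hσmem).2
    rw [Finset.not_nonempty_iff_eq_empty] at hσgood
    have hgood : ∀ i, ¬ (Odd ((σ.cycleOf i).support.card) ∨ σ i = i) := by
      intro i hi
      have hmem : i ∈ TutteAux.crit σ := Finset.mem_filter.mpr ⟨Finset.mem_univ _, hi⟩
      rw [hσgood] at hmem
      exact absurd hmem (Finset.notMem_empty i)
    have hfix : ∀ i, σ i ≠ i := fun i h => hgood i (Or.inr h)
    have heven : ∀ i, Even ((σ.cycleOf i).support.card) :=
      fun i => (Nat.not_odd_iff_even).mp (fun h => hgood i (Or.inl h))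
    have hprod : ∏ i, A (σ i) i ≠ 0 := fun h => hσne (by rw [h, smul_zero])
    have hAne : ∀ i, A (σ i) i ≠ 0 :=
      fun i h => hprod (Finset.prod_eq_zero (Finset.mem_univ i) h)
    have hadjσ : ∀ i, G.Adj (σ i) i := fun i => hadj _ _ (hAne i)
    obtain ⟨f, hff, hfne, hfor⟩ := TutteAux.exists_involution σ hfix heven
    have hfadj : ∀ i, G.Adj i (f i) := by
      intro i
      rcases hfor i with h | h
      · rw [h]; exact (hadjσ i).symm
      · rw [h]
        have := hadjσ (σ⁻¹ i)
        rw [Equiv.Perm.coe_inv, Equiv.apply_symm_apply] at this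
        exact this
    refine ⟨⟨Set.univ, fun u v => f u = v, ?_, ?_, ?_⟩, ?_, ?_⟩
    · intro u v h
      exact h ▸ hfadj u
    · intro u v _
      exact Set.mem_univ u
    · constructor
      intro u v h
      show f v = u
      rw [← h, hff]
    · intro v _
      exact ⟨f v, rfl, fun y hy => (show f v = y from hy).symm⟩
    · intro v
      exact Set.mem_univ v
end

section
/- Tutte gadget correctness, one direction: if the Tutte gadget T of a degree sequence realization problem (with forbidden edge set B) has a perfect matching M, then the set of pairs {u,v} with {v^u, u^v} ∈ M forms a simple graph on V avoiding all edges of B in which every vertex v has degree exactly d(v). -/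
/-- The set `S_v = V \ ({v} ∪ N_B(v))` of allowed neighbors of `v`, given the forbidden
(blue) graph `B`. -/
def allowedNbrs {V : Type*} [Fintype V] [DecidableEq V] (B : SimpleGraph V)
    [DecidableRel B.Adj] (v : V) : Finset V :=
  Finset.univ.filter (fun u => u ≠ v ∧ ¬ B.Adj v u)

/-- Validity predicate for vertices of the Tutte gadget: `Sum.inl (v, u)` encodes the vertex
`v^u` (requiring `u ∈ S_v`), and `Sum.inr (v, i)` encodes the auxiliary vertex `a^v_{i+1}`
(requiring `i < |S_v| − d(v)`). -/
def GadgetValid {V : Type*} [Fintype V] [DecidableEq V] (d : V → ℕ) (B : SimpleGraph V)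
    [DecidableRel B.Adj] : V × V ⊕ V × ℕ → Prop
  | Sum.inl (v, u) => u ∈ allowedNbrs B v
  | Sum.inr (v, i) => i < (allowedNbrs B v).card - d v

/-- The vertex set of the Tutte gadget. -/
def GadgetVertex {V : Type*} [Fintype V] [DecidableEq V] (d : V → ℕ) (B : SimpleGraph V)
    [DecidableRel B.Adj] : Type _ :=
  { x : V × V ⊕ V × ℕ // GadgetValid d B x }

/-- The edges of the Tutte gadget: `{v^u, u^v}` for `u ∈ S_v`, and `{v^u, a^v_i}` for all
`u ∈ S_v` and all `i`. -/
def gadgetRel {V : Type*} [Fintype V] [DecidableEq V] (d : V → ℕ) (B : SimpleGraph V)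
    [DecidableRel B.Adj] (x y : GadgetVertex d B) : Prop :=
  (∃ v u, x.1 = Sum.inl (v, u) ∧ y.1 = Sum.inl (u, v)) ∨
  (∃ v u i, x.1 = Sum.inl (v, u) ∧ y.1 = Sum.inr (v, i))

/-- The Tutte gadget graph of the degree sequence realization problem with degrees `d` and
forbidden (blue) graph `B`. -/
def Gadget {V : Type*} [Fintype V] [DecidableEq V] (d : V → ℕ) (B : SimpleGraph V)
    [DecidableRel B.Adj] : SimpleGraph (GadgetVertex d B) :=
  SimpleGraph.fromRel (gadgetRel d B)

/-- The graph on `V` realized by a matching `M` of the Tutte gadget: `u` and `v` are adjacent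
iff the edge `{v^u, u^v}` belongs to `M`. -/
def realizedGraph {V : Type*} [Fintype V] [DecidableEq V] {d : V → ℕ} {B : SimpleGraph V}
    [DecidableRel B.Adj] (M : (Gadget d B).Subgraph) : SimpleGraph V :=
  SimpleGraph.fromRel (fun u v => ∃ x y : GadgetVertex d B,
    x.1 = Sum.inl (v, u) ∧ y.1 = Sum.inl (u, v) ∧ M.Adj x y)

section Helpers

open Finset

variable {V : Type*} [Fintype V] [DecidableEq V] {d : V → ℕ} {B : SimpleGraph V}
  [DecidableRel B.Adj]

lemma mem_allowedNbrs {u v : V} : u ∈ allowedNbrs B v ↔ u ≠ v ∧ ¬ B.Adj v u := by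
  simp [allowedNbrs]

lemma gadgetValid_inl {v u : V} :
    GadgetValid d B (Sum.inl (v, u)) ↔ u ∈ allowedNbrs B v := Iff.rfl

lemma gadgetValid_inr {v : V} {i : ℕ} :
    GadgetValid d B (Sum.inr (v, i)) ↔ i < (allowedNbrs B v).card - d v := Iff.rfl

lemma gadget_adj_inl {x y : GadgetVertex d B} {v u : V} (hx : x.1 = Sum.inl (v, u))
    (h : (Gadget d B).Adj x y) :
    y.1 = Sum.inl (u, v) ∨ ∃ i, y.1 = Sum.inr (v, i) := by
  obtain ⟨-, h | h⟩ := h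
  · rcases h with ⟨v', u', h1, h2⟩ | ⟨v', u', i, h1, h2⟩
    · rw [hx] at h1
      obtain ⟨rfl, rfl⟩ : v' = v ∧ u' = u := by simpa [Prod.ext_iff, eq_comm] using h1
      exact Or.inl h2
    · rw [hx] at h1
      obtain ⟨rfl, rfl⟩ : v' = v ∧ u' = u := by simpa [Prod.ext_iff, eq_comm] using h1
      exact Or.inr ⟨i, h2⟩
  · rcases h with ⟨v', u', h1, h2⟩ | ⟨v', u', i, h1, h2⟩
    · rw [hx] at h2
      obtain ⟨rfl, rfl⟩ : u' = v ∧ v' = u := by simpa [Prod.ext_iff, eq_comm] using h2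
      exact Or.inl h1
    · rw [hx] at h2
      simp at h2

lemma gadget_adj_inr {x y : GadgetVertex d B} {v : V} {i : ℕ} (hx : x.1 = Sum.inr (v, i))
    (h : (Gadget d B).Adj x y) : ∃ u, y.1 = Sum.inl (v, u) := by
  obtain ⟨-, h | h⟩ := h
  · rcases h with ⟨v', u', h1, h2⟩ | ⟨v', u', j, h1, h2⟩ <;> rw [hx] at h1 <;> simp at h1
  · rcases h with ⟨v', u', h1, h2⟩ | ⟨v', u', j, h1, h2⟩
    · rw [hx] at h2; simp at h2
    · rw [hx] at h2
      obtain ⟨rfl, rfl⟩ : v' = v ∧ j = i := by simpa [Prod.ext_iff, eq_comm] using h2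
      exact ⟨u', h1⟩

end Helpers

/-- **Tutte gadget correctness, one direction.** If the Tutte gadget of a degree sequence
realization problem (with forbidden edge set `B`) has a perfect matching `M`, then the set of
pairs `{u, v}` with `{v^u, u^v} ∈ M` forms a simple graph on `V` avoiding all edges of `B`,
in which every vertex `v` has degree exactly `d(v)`. -/



theorem gadget_perfectMatching_realizes {V : Type*} [Fintype V] [DecidableEq V] (d : V → ℕ)
    (B : SimpleGraph V) [DecidableRel B.Adj]
    (hS : ∀ v, d v ≤ (allowedNbrs B v).card)
    (M : (Gadget d B).Subgraph) (hM : M.IsPerfectMatching) :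
    (∀ u v, (realizedGraph M).Adj u v → ¬ B.Adj u v) ∧
    (∀ v, ((realizedGraph M).neighborSet v).ncard = d v) := by
  classical
  have hpm : ∀ x : GadgetVertex d B, ∃ y, M.Adj x y ∧ ∀ z, M.Adj x z → z = y := by
    intro x
    obtain ⟨y, hy, hy'⟩ := hM.1 (hM.2 x)
    exact ⟨y, hy, hy'⟩
  choose p hp hup using hpm
  constructor
  · intro u v h hB
    rw [realizedGraph, SimpleGraph.fromRel_adj] at h
    obtain ⟨hne, ⟨x, y, hx, hy, hxy⟩ | ⟨x, y, hx, hy, hxy⟩⟩ := h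
    · have hval := x.2
      rw [hx] at hval
      exact (mem_allowedNbrs.mp (gadgetValid_inl.mp hval)).2 (B.adj_symm hB)
    · have hval := x.2
      rw [hx] at hval
      exact (mem_allowedNbrs.mp (gadgetValid_inl.mp hval)).2 hB
  · intro v
    set A := allowedNbrs B v with hA
    set N : Finset V := A.filter (fun u => ∃ x y : GadgetVertex d B,
      x.1 = Sum.inl (v, u) ∧ y.1 = Sum.inl (u, v) ∧ M.Adj x y) with hN
    have hset : (realizedGraph M).neighborSet v = ↑N := by
      ext u
      simp only [SimpleGraph.mem_neighborSet, realizedGraph, SimpleGraph.fromRel_adj,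
        Finset.coe_filter, Set.mem_setOf_eq, hN, Finset.mem_filter]
      constructor
      · rintro ⟨hne, ⟨x, y, hx, hy, hxy⟩ | ⟨x, y, hx, hy, hxy⟩⟩
        · have hval := y.2
          rw [hy] at hval
          exact ⟨gadgetValid_inl.mp hval, y, x, hy, hx, hxy.symm⟩
        · have hval := x.2
          rw [hx] at hval
          exact ⟨gadgetValid_inl.mp hval, x, y, hx, hy, hxy⟩
      · rintro ⟨hu, x, y, hx, hy, hxy⟩
        exact ⟨fun h => (mem_allowedNbrs.mp hu).1 h.symm, Or.inr ⟨x, y, hx, hy, hxy⟩⟩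
    rw [hset, Set.ncard_coe_finset]
    -- main counting argument
    have hNA : N ⊆ A := Finset.filter_subset _ _
    have hNcard : N.card ≤ A.card := Finset.card_le_card hNA
    -- a junk-valued projection
    have hpart : ∀ i (hi : i < A.card - d v), ∃ u, u ∈ A ∧
        (p ⟨Sum.inr (v, i), hi⟩).1 = Sum.inl (v, u) := by
      intro i hi
      obtain ⟨u, hu⟩ := gadget_adj_inr rfl (M.adj_sub (hp ⟨Sum.inr (v, i), hi⟩))
      have hval := (p ⟨Sum.inr (v, i), hi⟩).2
      rw [hu] at hval
      exact ⟨u, gadgetValid_inl.mp hval, hu⟩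
    have hmatchaux : ∀ u (hu : u ∈ A), u ∉ N →
        ∃ i, (p ⟨Sum.inl (v, u), hu⟩).1 = Sum.inr (v, i) := by
      intro u hu huN
      rcases gadget_adj_inl rfl (M.adj_sub (hp ⟨Sum.inl (v, u), hu⟩)) with h | h
      · exact absurd (Finset.mem_filter.mpr ⟨hu, ⟨Sum.inl (v, u), hu⟩, _, rfl, h,
          hp _⟩) huN
      · exact h
    have key : (Finset.range (A.card - d v)).card = (A \ N).card := by
      apply Finset.card_bij (fun i hi =>
        (hpart i (Finset.mem_range.mp hi)).choose)
      · intro i hi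
        obtain ⟨huA, hpu⟩ := (hpart i (Finset.mem_range.mp hi)).choose_spec
        set u := (hpart i (Finset.mem_range.mp hi)).choose with hu
        refine Finset.mem_sdiff.mpr ⟨huA, fun huN => ?_⟩
        obtain ⟨-, x, y, hx, hy, hxy⟩ := Finset.mem_filter.mp huN
        set z : GadgetVertex d B := ⟨Sum.inr (v, i), Finset.mem_range.mp hi⟩ with hz
        have hxw : x = p z := Subtype.ext (hx.trans hpu.symm)
        have hyz : y = p x := hup x y hxy
        have hzx : z = p x := hup x z (by rw [hxw]; exact (hp z).symm)
        rw [← hyz] at hzx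
        have : y.1 = Sum.inr (v, i) := by rw [← hzx]
        rw [hy] at this
        simp at this
      · intro i hi j hj hij
        obtain ⟨huA, hpu⟩ := (hpart i (Finset.mem_range.mp hi)).choose_spec
        obtain ⟨huA', hpu'⟩ := (hpart j (Finset.mem_range.mp hj)).choose_spec
        rw [hij] at hpu
        set zi : GadgetVertex d B := ⟨Sum.inr (v, i), Finset.mem_range.mp hi⟩ with hzi
        set zj : GadgetVertex d B := ⟨Sum.inr (v, j), Finset.mem_range.mp hj⟩ with hzj
        have hpp : p zi = p zj := Subtype.ext (hpu.trans hpu'.symm)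
        have h1 : zi = p (p zi) := hup (p zi) zi (hp zi).symm
        have h2 : zj = p (p zj) := hup (p zj) zj (hp zj).symm
        rw [hpp, ← h2] at h1
        have := congrArg Subtype.val h1
        simpa [hzi, hzj] using this
      · intro u hu
        obtain ⟨huA, huN⟩ := Finset.mem_sdiff.mp hu
        obtain ⟨i, hi⟩ := hmatchaux u huA huN
        have hiv := (p ⟨Sum.inl (v, u), huA⟩).2
        rw [hi] at hiv
        have hilt : i < A.card - d v := gadgetValid_inr.mp hiv
        refine ⟨i, Finset.mem_range.mpr hilt, ?_⟩
        obtain ⟨huA2, hpu2⟩ := (hpart i hilt).choose_spec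
        set z : GadgetVertex d B := ⟨Sum.inr (v, i), hilt⟩ with hz
        set w : GadgetVertex d B := ⟨Sum.inl (v, u), huA⟩ with hw
        have hzw : z = p w := Subtype.ext hi.symm
        have hwz : w = p z := hup z w (by rw [hzw]; exact (hp w).symm)
        have : Sum.inl (v, (hpart i hilt).choose) = (Sum.inl (v, u) : V × V ⊕ V × ℕ) := by
          rw [← hpu2, ← hwz]
        simpa [eq_comm] using this
    have hdiff : (A \ N).card = A.card - N.card := Finset.card_sdiff_of_subset hNA
    rw [Finset.card_range] at key
    have hSv : d v ≤ A.card := hS v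
    omega
end

section
/- Tutte gadget correctness, converse direction: if there exists a simple graph G' on V with deg_{G'}(v) = d(v) for all v and E(G') ∩ B = ∅, then the Tutte gadget T has a perfect matching M such that {v^u, u^v} ∈ M exactly for the edges {u,v} of G'. -/
/-- **Tutte gadget correctness, converse direction.** If there exists a simple graph `G'` on
`V` with `deg_{G'}(v) = d(v)` for all `v` and `E(G') ∩ B = ∅`, then the Tutte gadget has a
perfect matching `M` such that `{v^u, u^v} ∈ M` exactly for the edges `{u, v}` of `G'`. -/
theorem gadget_perfectMatching_of_realization {V : Type*} [Fintype V] [DecidableEq V]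
    (d : V → ℕ) (B : SimpleGraph V) [DecidableRel B.Adj]
    (hS : ∀ v, d v ≤ (allowedNbrs B v).card)
    (G' : SimpleGraph V)
    (hdeg : ∀ v, (G'.neighborSet v).ncard = d v)
    (hB : ∀ u v, G'.Adj u v → ¬ B.Adj u v) :
    ∃ M : (Gadget d B).Subgraph, M.IsPerfectMatching ∧
      ∀ (x y : GadgetVertex d B) (v u : V),
        x.1 = Sum.inl (v, u) → y.1 = Sum.inl (u, v) → (M.Adj x y ↔ G'.Adj u v) := by

  classical
  -- the set of allowed but non-realized neighbors of `v`
  set Nv : V → Finset V := fun v => (allowedNbrs B v).filter (fun u => ¬ G'.Adj v u)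
    with hNvdef
  have hmemNv : ∀ v u, u ∈ Nv v ↔ u ∈ allowedNbrs B v ∧ ¬ G'.Adj v u := by
    intro v u; simp [hNvdef]
  have hsub : ∀ v, G'.neighborFinset v ⊆ allowedNbrs B v := by
    intro v u hu
    rw [SimpleGraph.mem_neighborFinset] at hu
    simp only [allowedNbrs, Finset.mem_filter, Finset.mem_univ, true_and]
    exact ⟨fun h => G'.loopless.irrefl v (h ▸ hu), hB v u hu⟩
  have hcard : ∀ v, (Nv v).card = (allowedNbrs B v).card - d v := by
    intro v
    have h1 : Nv v = allowedNbrs B v \ G'.neighborFinset v := by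
      ext u
      simp only [hmemNv, Finset.mem_sdiff, SimpleGraph.mem_neighborFinset]
    rw [h1, Finset.card_sdiff_of_subset (hsub v)]
    congr 1
    rw [← hdeg v, ← Set.ncard_coe_finset, SimpleGraph.neighborFinset_def, Set.coe_toFinset]
  have e : ∀ v, {u // u ∈ Nv v} ≃ Fin ((allowedNbrs B v).card - d v) :=
    fun v => (Nv v).equivFinOfCardEq (hcard v)
  -- the matching relation
  set A : GadgetVertex d B → GadgetVertex d B → Prop := fun x y =>
    (∃ v u, x.1 = Sum.inl (v, u) ∧ y.1 = Sum.inl (u, v) ∧ G'.Adj v u) ∨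
    (∃ v u i, x.1 = Sum.inl (v, u) ∧ y.1 = Sum.inr (v, i) ∧
      ∃ h : u ∈ Nv v, ((e v ⟨u, h⟩ : Fin _) : ℕ) = i) ∨
    (∃ v u i, x.1 = Sum.inr (v, i) ∧ y.1 = Sum.inl (v, u) ∧
      ∃ h : u ∈ Nv v, ((e v ⟨u, h⟩ : Fin _) : ℕ) = i) with hAdef
  have hAsymm : Symmetric A := by
    intro x y h
    rcases h with ⟨v, u, hx, hy, h⟩ | ⟨v, u, i, hx, hy, h⟩ | ⟨v, u, i, hx, hy, h⟩
    · exact Or.inl ⟨u, v, hy, hx, h.symm⟩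
    · exact Or.inr (Or.inr ⟨v, u, i, hy, hx, h⟩)
    · exact Or.inr (Or.inl ⟨v, u, i, hy, hx, h⟩)
  have hAsub : ∀ x y, A x y → (Gadget d B).Adj x y := by
    intro x y h
    rw [Gadget, SimpleGraph.fromRel_adj]
    rcases h with ⟨v, u, hx, hy, h⟩ | ⟨v, u, i, hx, hy, h⟩ | ⟨v, u, i, hx, hy, h⟩
    · refine ⟨?_, Or.inl (Or.inl ⟨v, u, hx, hy⟩)⟩
      intro hxy
      rw [hxy, hy] at hx
      simp only [Sum.inl.injEq, Prod.mk.injEq] at hx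
      exact h.ne' hx.1
    · refine ⟨?_, Or.inl (Or.inr ⟨v, u, i, hx, hy⟩)⟩
      intro hxy
      rw [hxy, hy] at hx
      simp at hx
    · refine ⟨?_, Or.inr (Or.inr ⟨v, u, i, hy, hx⟩)⟩
      intro hxy
      rw [hxy, hy] at hx
      simp at hx
  -- the matching property
  have hAmatch : ∀ x : GadgetVertex d B, ∃! y, A x y := by
    rintro ⟨(⟨v, u⟩ | ⟨v, i⟩), hval⟩
    · have hval' : u ∈ allowedNbrs B v := hval
      by_cases hadj : G'.Adj v u
      · -- matched with `u^v`
        have hvalid : GadgetValid d B (Sum.inl (u, v)) := by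
          show v ∈ allowedNbrs B u
          simp only [allowedNbrs, Finset.mem_filter, Finset.mem_univ, true_and]
          exact ⟨hadj.ne, hB u v hadj.symm⟩
        refine ⟨⟨Sum.inl (u, v), hvalid⟩, Or.inl ⟨v, u, rfl, rfl, hadj⟩, ?_⟩
        rintro y' (⟨v', u', hx, hy, h⟩ | ⟨v', u', i', hx, hy, ⟨hm, h⟩⟩ |
          ⟨v', u', i', hx, hy, h⟩)
        · simp only [Sum.inl.injEq, Prod.mk.injEq] at hx
          obtain ⟨rfl, rfl⟩ := hx
          exact Subtype.ext hy
        · simp only [Sum.inl.injEq, Prod.mk.injEq] at hx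
          obtain ⟨rfl, rfl⟩ := hx
          exact absurd hadj ((hmemNv v u).mp hm).2
        · simp at hx
      · -- matched with an auxiliary vertex
        have hm : u ∈ Nv v := (hmemNv v u).mpr ⟨hval', hadj⟩
        have hvalid : GadgetValid d B (Sum.inr (v, ((e v ⟨u, hm⟩ : Fin _) : ℕ))) := by
          show ((e v ⟨u, hm⟩ : Fin _) : ℕ) < (allowedNbrs B v).card - d v
          exact (e v ⟨u, hm⟩).2
        refine ⟨⟨Sum.inr (v, _), hvalid⟩,
          Or.inr (Or.inl ⟨v, u, _, rfl, rfl, hm, rfl⟩), ?_⟩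
        rintro y' (⟨v', u', hx, hy, h⟩ | ⟨v', u', i', hx, hy, ⟨hm', h⟩⟩ |
          ⟨v', u', i', hx, hy, h⟩)
        · simp only [Sum.inl.injEq, Prod.mk.injEq] at hx
          obtain ⟨rfl, rfl⟩ := hx
          exact absurd h hadj
        · simp only [Sum.inl.injEq, Prod.mk.injEq] at hx
          obtain ⟨rfl, rfl⟩ := hx
          apply Subtype.ext
          rw [hy, ← h]
        · simp at hx
    · -- an auxiliary vertex, matched with `v^u` for `u = (e v).symm i`
      have hval' : i < (allowedNbrs B v).card - d v := hval
      set u : {u // u ∈ Nv v} := (e v).symm ⟨i, hval'⟩ with hudef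
      have hvalid : GadgetValid d B (Sum.inl (v, u.1)) := by
        show u.1 ∈ allowedNbrs B v
        exact ((hmemNv v u.1).mp u.2).1
      have hei : ((e v ⟨u.1, u.2⟩ : Fin _) : ℕ) = i := by
        rw [Subtype.eta, hudef, Equiv.apply_symm_apply]
      refine ⟨⟨Sum.inl (v, u.1), hvalid⟩,
        Or.inr (Or.inr ⟨v, u.1, i, rfl, rfl, u.2, hei⟩), ?_⟩
      rintro y' (⟨v', u', hx, hy, h⟩ | ⟨v', u', i', hx, hy, h⟩ |
        ⟨v', u', i', hx, hy, ⟨hm', h⟩⟩)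
      · simp at hx
      · simp at hx
      · simp only [Sum.inr.injEq, Prod.mk.injEq] at hx
        obtain ⟨rfl, rfl⟩ := hx
        have : (⟨u', hm'⟩ : {u // u ∈ Nv v}) = u := by
          rw [hudef]
          apply (e v).injective
          rw [Equiv.apply_symm_apply]
          exact Fin.ext h
        apply Subtype.ext
        rw [hy]
        simp only [Sum.inl.injEq, Prod.mk.injEq]
        exact ⟨trivial, congrArg Subtype.val this⟩
  refine ⟨{ verts := Set.univ, Adj := A, adj_sub := fun h => hAsub _ _ h,
            edge_vert := fun _ => Set.mem_univ _, symm := ⟨fun a b h => hAsymm h⟩ }, ⟨?_, ?_⟩, ?_⟩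
  · intro x _
    exact hAmatch x
  · intro x
    exact Set.mem_univ _
  · intro x y v u hx hy
    constructor
    · rintro (⟨v', u', hx', hy', h⟩ | ⟨v', u', i', hx', hy', h⟩ |
        ⟨v', u', i', hx', hy', h⟩)
      · rw [hx] at hx'
        simp only [Sum.inl.injEq, Prod.mk.injEq] at hx'
        obtain ⟨rfl, rfl⟩ := hx'
        exact h.symm
      · rw [hy] at hy'
        simp at hy'
      · rw [hx] at hx'
        simp at hx'
    · intro h
      exact Or.inl ⟨v, u, hx, hy, h.symm⟩
end

section
/- Let f be a polynomial in z₁,...,z_k over a field of characteristic zero. Then (∏_{ℓ=1}^k ∇_{z_ℓ}^{m_ℓ}) f is not identically zero if and only if f contains a monomial in which the exponent of z_ℓ is at least m_ℓ for every ℓ = 1,...,k. -/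
open MvPolynomial

/-- The backward difference operator in the variable `x`:
`(∇_x f)(…, x, …) = f(…, x, …) − f(…, x − 1, …)`. -/
noncomputable def nabla {σ : Type*} [DecidableEq σ] {R : Type*} [CommRing R] (x : σ)
    (f : MvPolynomial σ R) : MvPolynomial σ R :=
  f - MvPolynomial.aeval (fun y => if y = x then X x - 1 else X y) f

namespace NablaAux
variable {σ : Type*} [DecidableEq σ] {R : Type*} [CommRing R]

noncomputable def phi (x : σ) : σ → MvPolynomial σ R :=
  fun y => if y = x then X x - 1 else X y

lemma nabla_def (x : σ) (f : MvPolynomial σ R) : nabla x f = f - aeval (phi x) f := rfl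

noncomputable def nablaLM (x : σ) : MvPolynomial σ R →ₗ[R] MvPolynomial σ R :=
  LinearMap.id - (aeval (phi x)).toLinearMap

lemma nabla_eq (x : σ) (f : MvPolynomial σ R) : nabla x f = nablaLM x f := rfl

lemma supp_X_mul {x : σ} {p : MvPolynomial σ R} {t : σ →₀ ℕ}
    (ht : t ∈ (X x * p).support) :
    ∃ t' ∈ p.support, t = Finsupp.single x 1 + t' := by
  rw [mem_support_iff, coeff_X_mul'] at ht
  split_ifs at ht with h
  · refine ⟨t - Finsupp.single x 1, mem_support_iff.mpr ht, ?_⟩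
    have hx : 1 ≤ t x := by
      rw [Finsupp.mem_support_iff] at h; omega
    ext y
    by_cases hy : y = x
    · subst hy
      simp [Finsupp.single_apply, Finsupp.tsub_apply]
      omega
    · simp [Finsupp.single_apply, Finsupp.tsub_apply, hy, Ne.symm hy]
  · exact absurd rfl ht

lemma w_supp (x : σ) : ∀ (a : ℕ), ∀ t ∈ ((X x - 1) ^ a : MvPolynomial σ R).support,
    (∀ y, y ≠ x → t y = 0) ∧ t x ≤ a := by
  intro a
  induction a with
  | zero =>
    intro t ht
    rw [pow_zero, mem_support_iff, coeff_one] at ht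
    split_ifs at ht with h
    · subst h; simp
    · exact absurd rfl ht
  | succ a ih =>
    intro t ht
    have hrw : ((X x - 1) ^ (a+1) : MvPolynomial σ R)
        = X x * (X x - 1) ^ a - (X x - 1) ^ a := by ring
    rw [hrw, mem_support_iff, coeff_sub] at ht
    have : coeff t (X x * (X x - 1) ^ a : MvPolynomial σ R) ≠ 0 ∨ coeff t ((X x - 1) ^ a : MvPolynomial σ R) ≠ 0 := by
      by_contra h
      push_neg at h
      rw [h.1, h.2, sub_zero] at ht
      exact ht rfl
    rcases this with h | h
    · obtain ⟨t', ht', rfl⟩ := supp_X_mul (mem_support_iff.mpr h)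
      obtain ⟨h1, h2⟩ := ih t' ht'
      constructor
      · intro y hy
        simp [Finsupp.single_apply, hy, Ne.symm hy, h1 y hy]
      · simp only [Finsupp.add_apply, Finsupp.single_eq_same]
        omega
    · obtain ⟨h1, h2⟩ := ih t (mem_support_iff.mpr h)
      exact ⟨h1, h2.trans (Nat.le_succ a)⟩

lemma w_coeff (x : σ) : ∀ (a : ℕ),
    coeff (Finsupp.single x a) ((X x - 1) ^ a : MvPolynomial σ R) = 1 := by
  intro a
  induction a with
  | zero => simp
  | succ a ih =>
    have hrw : ((X x - 1) ^ (a+1) : MvPolynomial σ R)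
        = X x * (X x - 1) ^ a - (X x - 1) ^ a := by ring
    rw [hrw, coeff_sub]
    have h1 : coeff (Finsupp.single x (a+1)) (X x * (X x - 1) ^ a : MvPolynomial σ R) = 1 := by
      have : (Finsupp.single x (a+1) : σ →₀ ℕ) = Finsupp.single x 1 + Finsupp.single x a := by
        rw [← Finsupp.single_add]; ring_nf
      rw [this, coeff_X_mul, ih]
    have h2 : coeff (Finsupp.single x (a+1)) ((X x - 1) ^ a : MvPolynomial σ R) = 0 := by
      by_contra h
      have := (w_supp x a _ (mem_support_iff.mpr h)).2
      simp at this
    rw [h1, h2, sub_zero]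

lemma q_supp (x : σ) : ∀ (a : ℕ), ∀ t ∈ ((X x ^ a - (X x - 1) ^ a : MvPolynomial σ R)).support,
    (∀ y, y ≠ x → t y = 0) ∧ t x < a := by
  intro a
  induction a with
  | zero => intro t ht; simp at ht
  | succ a ih =>
    intro t ht
    have hrw : ((X x) ^ (a+1) - (X x - 1) ^ (a+1) : MvPolynomial σ R)
        = X x * (X x ^ a - (X x - 1) ^ a) + (X x - 1) ^ a := by ring
    rw [hrw, mem_support_iff, coeff_add] at ht
    have : coeff t (X x * (X x ^ a - (X x - 1) ^ a) : MvPolynomial σ R) ≠ 0 ∨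
        coeff t ((X x - 1) ^ a : MvPolynomial σ R) ≠ 0 := by
      by_contra h
      push_neg at h
      rw [h.1, h.2, add_zero] at ht
      exact ht rfl
    rcases this with h | h
    · obtain ⟨t', ht', rfl⟩ := supp_X_mul (mem_support_iff.mpr h)
      obtain ⟨h1, h2⟩ := ih t' ht'
      constructor
      · intro y hy
        simp [Finsupp.single_apply, hy, Ne.symm hy, h1 y hy]
      · simp only [Finsupp.add_apply, Finsupp.single_eq_same]
        omega
    · obtain ⟨h1, h2⟩ := w_supp x a t (mem_support_iff.mpr h)
      exact ⟨h1, by omega⟩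

lemma q_coeff (x : σ) : ∀ (a : ℕ),
    coeff (Finsupp.single x a) ((X x ^ (a+1) - (X x - 1) ^ (a+1) : MvPolynomial σ R))
      = (a + 1 : R) := by
  intro a
  induction a with
  | zero => simp
  | succ a ih =>
    have hrw : ((X x) ^ (a+2) - (X x - 1) ^ (a+2) : MvPolynomial σ R)
        = X x * (X x ^ (a+1) - (X x - 1) ^ (a+1)) + (X x - 1) ^ (a+1) := by ring
    rw [hrw, coeff_add]
    have h1 : (Finsupp.single x (a+1) : σ →₀ ℕ) = Finsupp.single x 1 + Finsupp.single x a := by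
      rw [← Finsupp.single_add]; ring_nf
    rw [h1, coeff_X_mul, ih, ← h1, w_coeff]
    push_cast; ring

lemma aeval_phi_erase (x : σ) (s : σ →₀ ℕ) (c : R) :
    aeval (phi x) (monomial (s.erase x) c) = monomial (s.erase x) c := by
  rw [aeval_monomial, monomial_eq]
  congr 1
  apply Finsupp.prod_congr
  intro y hy
  rw [Finsupp.support_erase, Finset.mem_erase] at hy
  simp only [phi, if_neg hy.1]

lemma nabla_monomial (x : σ) (s : σ →₀ ℕ) (c : R) :
    nabla x (monomial s c)
      = (X x ^ (s x) - (X x - 1) ^ (s x)) * monomial (s.erase x) c := by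
  have h1 : (monomial s c : MvPolynomial σ R) = X x ^ (s x) * monomial (s.erase x) c := by
    rw [X_pow_eq_monomial, monomial_mul, one_mul, Finsupp.single_add_erase]
  have h3 : aeval (phi x : σ → MvPolynomial σ R) (X x : MvPolynomial σ R)
      = (X x - 1 : MvPolynomial σ R) := by
    simp [phi]
  rw [nabla_def, h1, map_mul, map_pow, h3, aeval_phi_erase]
  ring

lemma supp_nabla_monomial {x : σ} {s t : σ →₀ ℕ} {c : R}
    (ht : t ∈ (nabla x (monomial s c)).support) :
    (∀ y, y ≠ x → t y = s y) ∧ t x < s x := by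
  rw [nabla_monomial] at ht
  have := support_mul _ _ ht
  rw [Finset.mem_add] at this
  obtain ⟨a, ha, b, hb, hab⟩ := this
  have hb' : b = s.erase x := Finset.mem_singleton.mp (support_monomial_subset hb)
  obtain ⟨h1, h2⟩ := q_supp x (s x) a ha
  subst hb'
  constructor
  · intro y hy
    rw [← hab]
    simp [Finsupp.erase_ne hy, h1 y hy]
  · rw [← hab]
    simp only [Finsupp.add_apply, Finsupp.erase_same, add_zero]
    exact h2

lemma coeff_nabla_monomial {x : σ} {s : σ →₀ ℕ} {c : R} {a : ℕ} (h : s x = a + 1) :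
    coeff (Finsupp.single x a + s.erase x) (nabla x (monomial s c)) = (a + 1 : R) * c := by
  rw [nabla_monomial, coeff_mul_monomial, h, q_coeff]

lemma nabla_sum {ι : Type*} (x : σ) (s : Finset ι) (g : ι → MvPolynomial σ R) :
    nabla x (∑ i ∈ s, g i) = ∑ i ∈ s, nabla x (g i) := by
  rw [nabla_eq, map_sum]
  rfl

lemma supp_nabla {x : σ} {f : MvPolynomial σ R} {t : σ →₀ ℕ}
    (ht : t ∈ (nabla x f).support) :
    ∃ s ∈ f.support, (∀ y, y ≠ x → t y = s y) ∧ t x < s x := by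
  have hrw : nabla x f = ∑ s ∈ f.support, nabla x (monomial s (coeff s f)) := by
    conv_lhs => rw [f.as_sum]
    exact nabla_sum x _ _
  rw [hrw] at ht
  obtain ⟨s, hs, ht'⟩ := Finset.mem_biUnion.mp (support_sum ht)
  exact ⟨s, hs, supp_nabla_monomial ht'⟩

lemma coeff_nabla {x : σ} {f : MvPolynomial σ R} {t : σ →₀ ℕ}
    (H : ∀ u ∈ f.support, (∀ y, y ≠ x → u y = t y) → u x ≤ t x + 1) :
    coeff t (nabla x f) = (t x + 1 : R) * coeff (t + Finsupp.single x 1) f := by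
  set s' : σ →₀ ℕ := t + Finsupp.single x 1 with hs'
  have hs'x : s' x = t x + 1 := by simp [hs']
  have hs'y : ∀ y, y ≠ x → s' y = t y := by
    intro y hy; simp [hs', Finsupp.single_apply, Ne.symm hy]
  have hrw : nabla x f = ∑ s ∈ f.support, nabla x (monomial s (coeff s f)) := by
    conv_lhs => rw [f.as_sum]
    exact nabla_sum x _ _
  rw [hrw, coeff_sum]
  have key : ∀ u ∈ f.support, coeff t (nabla x (monomial u (coeff u f)))
      = if u = s' then (t x + 1 : R) * coeff u f else 0 := by
    intro u hu
    by_cases h : u = s'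
    · rw [if_pos h]
      have hux : u x = t x + 1 := by rw [h, hs'x]
      have hidx : Finsupp.single x (t x) + Finsupp.erase x u = t := by
        ext y
        by_cases hy : y = x
        · subst hy; simp
        · have huy : u y = t y := by rw [h]; exact hs'y y hy
          simp [Finsupp.single_apply, Ne.symm hy, Finsupp.erase_ne hy, huy]
      have hres := coeff_nabla_monomial (c := coeff u f) hux
      rw [hidx] at hres
      exact hres
    · rw [if_neg h]
      by_contra hc
      obtain ⟨h1, h2⟩ := supp_nabla_monomial (mem_support_iff.mpr hc)
      have hux : u x ≤ t x + 1 := H u hu (fun y hy => (h1 y hy).symm)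
      apply h
      ext y
      by_cases hy : y = x
      · subst hy
        rw [hs'x]; omega
      · rw [hs'y y hy, ← h1 y hy]
    
  rw [Finset.sum_congr rfl key, Finset.sum_ite_eq' f.support s']
  by_cases hmem : s' ∈ f.support
  · rw [if_pos hmem]
  · rw [if_neg hmem, notMem_support_iff.mp hmem, mul_zero]

lemma coeff_nabla_iter (x : σ) : ∀ (n : ℕ) (f : MvPolynomial σ R) (t : σ →₀ ℕ),
    (∀ u ∈ f.support, (∀ y, y ≠ x → u y = t y) → u x ≤ t x + n) →
    coeff t ((nabla x)^[n] f)
      = (Nat.descFactorial (t x + n) n : R) * coeff (t + Finsupp.single x n) f := by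
  intro n
  induction n with
  | zero => intro f t _; simp
  | succ n ih =>
    intro f t H
    rw [Function.iterate_succ_apply]
    have H1 : ∀ u ∈ (nabla x f).support, (∀ y, y ≠ x → u y = t y) → u x ≤ t x + n := by
      intro u hu hoff
      obtain ⟨w, hw, hw1, hw2⟩ := supp_nabla hu
      have : ∀ y, y ≠ x → w y = t y := fun y hy => (hw1 y hy) ▸ hoff y hy
      have := H w hw this
      omega
    rw [ih (nabla x f) t H1]
    have H2 : ∀ u ∈ f.support,
        (∀ y, y ≠ x → u y = (t + Finsupp.single x n) y) →
        u x ≤ (t + Finsupp.single x n) x + 1 := by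
      intro u hu hoff
      have hoff' : ∀ y, y ≠ x → u y = t y := by
        intro y hy
        have := hoff y hy
        simpa [Finsupp.single_apply, Ne.symm hy] using this
      have := H u hu hoff'
      simp only [Finsupp.add_apply, Finsupp.single_eq_same]
      omega
    rw [coeff_nabla H2]
    have hidx : t + Finsupp.single x n + Finsupp.single x 1 = t + Finsupp.single x (n+1) := by
      rw [add_assoc, ← Finsupp.single_add]
    rw [hidx]
    have hfac : (Nat.descFactorial (t x + (n+1)) (n+1) : R)
        = (Nat.descFactorial (t x + n) n : R) * ((t + Finsupp.single x n) x + 1 : R) := by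
      have h1 : (t + Finsupp.single x n) x = t x + n := by
        simp [Finsupp.single_eq_same]
      rw [h1]
      have h2 : t x + (n + 1) = (t x + n) + 1 := by ring
      rw [h2, Nat.succ_descFactorial_succ]
      push_cast
      ring
    rw [hfac]
    ring

lemma supp_nabla_iter (x : σ) : ∀ (n : ℕ) (f : MvPolynomial σ R) (t : σ →₀ ℕ),
    t ∈ ((nabla x)^[n] f).support →
    ∃ u ∈ f.support, (∀ y, y ≠ x → t y = u y) ∧ t x + n ≤ u x := by
  intro n
  induction n with
  | zero => intro f t ht; exact ⟨t, ht, fun y _ => rfl, le_refl _⟩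
  | succ n ih =>
    intro f t ht
    rw [Function.iterate_succ_apply] at ht
    obtain ⟨u, hu, hu1, hu2⟩ := ih (nabla x f) t ht
    obtain ⟨w, hw, hw1, hw2⟩ := supp_nabla hu
    refine ⟨w, hw, fun y hy => (hu1 y hy).trans (hw1 y hy), by omega⟩

variable (m : σ → ℕ)

noncomputable def SL (L : List σ) : σ →₀ ℕ :=
  (L.map (fun ℓ => Finsupp.single ℓ (m ℓ))).sum

lemma SL_nil : SL m ([] : List σ) = 0 := rfl

lemma SL_cons (ℓ : σ) (L : List σ) :
    SL m (ℓ :: L) = Finsupp.single ℓ (m ℓ) + SL m L := by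
  simp [SL]

lemma SL_apply_not_mem {y : σ} : ∀ {L : List σ}, y ∉ L → SL m L y = 0 := by
  intro L
  induction L with
  | nil => intro _; rfl
  | cons ℓ L ih =>
    intro hy
    rw [SL_cons]
    have h1 : y ≠ ℓ := fun h => hy (h ▸ (List.mem_cons_self : ℓ ∈ ℓ :: L))
    have h2 : y ∉ L := fun h => hy (List.mem_cons_of_mem _ h)
    simp [Finsupp.single_apply, Ne.symm h1, ih h2]

lemma SL_apply_mem {y : σ} : ∀ {L : List σ}, L.Nodup → y ∈ L → SL m L y = m y := by
  intro L
  induction L with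
  | nil => intro _ h; simp at h
  | cons ℓ L ih =>
    intro hnd hy
    rw [SL_cons]
    rcases List.mem_cons.mp hy with h | h
    · subst h
      have : y ∉ L := (List.nodup_cons.mp hnd).1
      simp [Finsupp.single_eq_same, SL_apply_not_mem m this]
    · have hne : y ≠ ℓ := by
        rintro rfl
        exact (List.nodup_cons.mp hnd).1 h
      simp [Finsupp.single_apply, Ne.symm hne, ih (List.nodup_cons.mp hnd).2 h]

lemma supp_fold : ∀ (L : List σ) (f : MvPolynomial σ R) (t : σ →₀ ℕ),
    t ∈ (L.foldr (fun ℓ g => (nabla ℓ)^[m ℓ] g) f).support →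
    ∃ u ∈ f.support, (∀ y, t y ≤ u y) ∧ (∀ y, y ∉ L → t y = u y) ∧
      (∀ ℓ ∈ L, t ℓ + m ℓ ≤ u ℓ) := by
  intro L
  induction L with
  | nil =>
    intro f t ht
    exact ⟨t, ht, fun y => le_refl _, fun y _ => rfl, fun ℓ h => absurd h List.not_mem_nil⟩
  | cons ℓ L ih =>
    intro f t ht
    rw [List.foldr_cons] at ht
    obtain ⟨u, hu, hu1, hu2⟩ := supp_nabla_iter ℓ (m ℓ) _ t ht
    obtain ⟨w, hw, hw0, hw1, hw2⟩ := ih f u hu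
    have htu : ∀ y, t y ≤ u y := by
      intro y
      by_cases hy : y = ℓ
      · subst hy; omega
      · rw [hu1 y hy]
    refine ⟨w, hw, fun y => le_trans (htu y) (hw0 y), ?_, ?_⟩
    · intro y hy
      have h1 : y ≠ ℓ := fun h => hy (h ▸ (List.mem_cons_self : ℓ ∈ ℓ :: L))
      have h2 : y ∉ L := fun h => hy (List.mem_cons_of_mem _ h)
      rw [hu1 y h1, hw1 y h2]
    · intro j hj
      rcases List.mem_cons.mp hj with h | h
      · subst h
        exact le_trans hu2 (hw0 j)
      · by_cases hy : j = ℓ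
        · subst hy
          have := hw2 j h
          omega
        · rw [hu1 j hy]
          exact hw2 j h

lemma coeff_fold : ∀ (L : List σ), L.Nodup → ∀ (f : MvPolynomial σ R) (t : σ →₀ ℕ),
    (∀ u ∈ f.support, ((∀ y, y ∉ L → u y = t y) ∧ ∀ ℓ ∈ L, t ℓ + m ℓ ≤ u ℓ) → u = t + SL m L) →
    coeff t (L.foldr (fun ℓ g => (nabla ℓ)^[m ℓ] g) f)
      = ((L.map (fun ℓ => Nat.descFactorial (t ℓ + m ℓ) (m ℓ))).prod : R)
          * coeff (t + SL m L) f := by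
  intro L
  induction L with
  | nil =>
    intro _ f t _
    simp [SL_nil]
  | cons ℓ L ih =>
    intro hnd f t H
    have hℓL : ℓ ∉ L := (List.nodup_cons.mp hnd).1
    have hndL : L.Nodup := (List.nodup_cons.mp hnd).2
    rw [List.foldr_cons]
    set g := L.foldr (fun j h => (nabla j)^[m j] h) f with hg
    -- Step 1 : hypothesis for coeff_nabla_iter
    have Hg : ∀ u ∈ g.support, (∀ y, y ≠ ℓ → u y = t y) → u ℓ ≤ t ℓ + m ℓ := by
      intro u hu hoff
      by_contra hc
      push_neg at hc
      obtain ⟨w, hw, hw0, hw1, hw2⟩ := supp_fold m L f u hu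
      have hweq : w = t + SL m (ℓ :: L) := by
        apply H w hw
        constructor
        · intro y hy
          have h1 : y ≠ ℓ := fun h => hy (h ▸ (List.mem_cons_self : ℓ ∈ ℓ :: L))
          have h2 : y ∉ L := fun h => hy (List.mem_cons_of_mem _ h)
          rw [← hw1 y h2, hoff y h1]
        · intro j hj
          rcases List.mem_cons.mp hj with h | h
          · subst h
            have := hw0 j
            omega
          · have hne : j ≠ ℓ := by rintro rfl; exact hℓL h
            have := hw2 j h
            rw [hoff j hne] at this
            omega
      have hwl : w ℓ = t ℓ + m ℓ := by
        rw [hweq]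
        simp only [Finsupp.add_apply, SL_cons, Finsupp.single_eq_same]
        rw [SL_apply_not_mem m hℓL]
        omega
      have := hw0 ℓ
      omega
    rw [coeff_nabla_iter ℓ (m ℓ) g t Hg]
    -- Step 2 : IH at t' = t + single ℓ (m ℓ)
    set t' : σ →₀ ℕ := t + Finsupp.single ℓ (m ℓ) with ht'
    have ht'ℓ : t' ℓ = t ℓ + m ℓ := by simp [ht', Finsupp.single_eq_same]
    have ht'y : ∀ y, y ≠ ℓ → t' y = t y := by
      intro y hy
      simp [ht', Finsupp.single_apply, Ne.symm hy]
    have H' : ∀ u ∈ f.support,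
        ((∀ y, y ∉ L → u y = t' y) ∧ ∀ j ∈ L, t' j + m j ≤ u j) → u = t' + SL m L := by
      intro u hu ⟨ha, hb⟩
      have hueq : u = t + SL m (ℓ :: L) := by
        apply H u hu
        constructor
        · intro y hy
          have h1 : y ≠ ℓ := fun h => hy (h ▸ (List.mem_cons_self : ℓ ∈ ℓ :: L))
          have h2 : y ∉ L := fun h => hy (List.mem_cons_of_mem _ h)
          rw [ha y h2, ht'y y h1]
        · intro j hj
          rcases List.mem_cons.mp hj with h | h
          · subst h
            rw [← ht'ℓ, ← ha j hℓL]
          · have hne : j ≠ ℓ := by rintro rfl; exact hℓL h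
            have := hb j h
            rw [ht'y j hne] at this
            exact this
      rw [hueq, SL_cons, ht', add_assoc]
    rw [ih hndL f t' H']
    have hprod : (L.map (fun j => Nat.descFactorial (t' j + m j) (m j)))
        = (L.map (fun j => Nat.descFactorial (t j + m j) (m j))) := by
      apply List.map_congr_left
      intro j hj
      have hne : j ≠ ℓ := by rintro rfl; exact hℓL hj
      rw [ht'y j hne]
    rw [hprod]
    have hidx : t' + SL m L = t + SL m (ℓ :: L) := by
      rw [SL_cons, ht', add_assoc]
    rw [hidx, List.map_cons, List.prod_cons]
    push_cast
    ring

end NablaAux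


open NablaAux

/-- Let `f` be a polynomial in `z₁, …, z_k` over a field of characteristic zero.  Then
`(∏_{ℓ=1}^k ∇_{z_ℓ}^{m_ℓ}) f` is not identically zero if and only if `f` contains a monomial
in which the exponent of `z_ℓ` is at least `m_ℓ` for every `ℓ = 1, …, k`. -/
theorem iterated_difference_ne_zero_iff {F : Type*} [Field F] [CharZero F] {k : ℕ}
    (m : Fin k → ℕ) (f : MvPolynomial (Fin k) F) :
    (List.finRange k).foldr (fun ℓ g => (nabla ℓ)^[m ℓ] g) f ≠ 0 ↔
      ∃ s ∈ f.support, ∀ ℓ : Fin k, m ℓ ≤ s ℓ := by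
  constructor
  · -- if the iterated difference is nonzero, a big monomial exists
    intro hne
    have hsupp : ((List.finRange k).foldr (fun ℓ g => (nabla ℓ)^[m ℓ] g) f).support.Nonempty := by
      rw [Finset.nonempty_iff_ne_empty]
      intro h
      exact hne (support_eq_empty.mp h)
    obtain ⟨t, ht⟩ := hsupp
    obtain ⟨u, hu, _, _, h3⟩ := supp_fold m (List.finRange k) f t ht
    refine ⟨u, hu, fun ℓ => ?_⟩
    have := h3 ℓ (List.mem_finRange ℓ)
    omega
  · rintro ⟨s₀, hs₀, hm⟩
    -- choose a maximal monomial above s₀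
    set A := f.support.filter (fun u => ∀ ℓ, s₀ ℓ ≤ u ℓ) with hA
    have hA0 : s₀ ∈ A := by
      rw [hA, Finset.mem_filter]
      exact ⟨hs₀, fun ℓ => le_refl _⟩
    obtain ⟨s, hsA, hsmax⟩ := Finset.exists_max_image A (fun u => ∑ ℓ : Fin k, u ℓ)
      ⟨s₀, hA0⟩
    rw [hA, Finset.mem_filter] at hsA
    obtain ⟨hs, hs0le⟩ := hsA
    have hms : ∀ ℓ, m ℓ ≤ s ℓ := fun ℓ => le_trans (hm ℓ) (hs0le ℓ)
    -- target exponent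
    have hnd : (List.finRange k).Nodup := List.nodup_finRange k
    have hSL : ∀ ℓ, SL m (List.finRange k) ℓ = m ℓ :=
      fun ℓ => SL_apply_mem m hnd (List.mem_finRange ℓ)
    set t : Fin k →₀ ℕ := s - SL m (List.finRange k) with htdef
    have hts : t + SL m (List.finRange k) = s := by
      ext ℓ
      simp only [Finsupp.add_apply, htdef, Finsupp.tsub_apply, hSL]
      have := hms ℓ
      omega
    have htℓ : ∀ ℓ, t ℓ + m ℓ = s ℓ := by
      intro ℓ
      have := congrFun (congrArg (↑·) hts) ℓ
      simp only [Finsupp.add_apply, hSL] at this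
      simpa using this
    -- hypothesis of coeff_fold
    have H : ∀ u ∈ f.support,
        ((∀ y, y ∉ List.finRange k → u y = t y) ∧
          ∀ ℓ ∈ List.finRange k, t ℓ + m ℓ ≤ u ℓ) → u = t + SL m (List.finRange k) := by
      intro u hu ⟨_, hb⟩
      have hsu : ∀ ℓ, s ℓ ≤ u ℓ := by
        intro ℓ
        have := hb ℓ (List.mem_finRange ℓ)
        rw [htℓ ℓ] at this
        exact this
      have huA : u ∈ A := by
        rw [hA, Finset.mem_filter]
        exact ⟨hu, fun ℓ => le_trans (hs0le ℓ) (hsu ℓ)⟩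
      have hsum : ∑ ℓ : Fin k, u ℓ ≤ ∑ ℓ : Fin k, s ℓ := hsmax u huA
      have hsum' : ∑ ℓ : Fin k, s ℓ ≤ ∑ ℓ : Fin k, u ℓ :=
        Finset.sum_le_sum (fun i _ => hsu i)
      have heq : ∀ i ∈ Finset.univ, s i = u i :=
        (Finset.sum_eq_sum_iff_of_le (fun i _ => hsu i)).mp (le_antisymm hsum' hsum)
      rw [hts]
      ext i
      exact (heq i (Finset.mem_univ i)).symm
    have hc := coeff_fold m (List.finRange k) hnd f t H
    rw [hts] at hc
    intro h0
    rw [h0, coeff_zero] at hc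
    have hcoeff : coeff s f ≠ 0 := mem_support_iff.mp hs
    have hprod : (((List.finRange k).map
        (fun ℓ => Nat.descFactorial (t ℓ + m ℓ) (m ℓ))).prod : ℕ) ≠ 0 := by
      have hpos : ∀ a ∈ (List.finRange k).map
          (fun ℓ => Nat.descFactorial (t ℓ + m ℓ) (m ℓ)), 0 < a := by
        intro a ha
        obtain ⟨ℓ, _, rfl⟩ := List.mem_map.mp ha
        have hne0 : (t ℓ + m ℓ).descFactorial (m ℓ) ≠ 0 := by
          rw [Ne, Nat.descFactorial_eq_zero_iff_lt]
          omega
        omega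
      exact Nat.pos_iff_ne_zero.mp (List.prod_pos hpos)
    exact (mul_ne_zero (Nat.cast_ne_zero.mpr hprod) hcoeff) hc.symm
end
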